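/- arXiv:1703.07803 — 9 statements merged into one kernel-verified Lean document; each statement's English description precedes it below -/
import Mathlib

section
/- Let C be a nonempty, closed and convex subset of a real Hilbert space H, let ε ≥ 0, let C_ε = {x ∈ H : d(x,C) ≤ ε}, and let x ∈ H \ C_ε. Then the metric projection of x onto C_ε is given by P_{C_ε}x = (1 − ε/‖x − P_C x‖) P_C x + (ε/‖x − P_C x‖) x. -/
open Metric

/-- `P` is the metric projection onto `C`: it maps every point `x` to a point of `C`
closest to `x`. -/
def IsMetricProj {H : Type*} [NormedAddCommGroup H] (C : Set H) (P : H → H) : Prop :=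
  ∀ x : H, P x ∈ C ∧ ∀ z ∈ C, ‖x - P x‖ ≤ ‖x - z‖

/-- Let `C` be a nonempty, closed and convex subset of a real Hilbert space `H`, let `ε ≥ 0`,
let `Cε = {y : d(y,C) ≤ ε}` and let `x ∈ H \ Cε`.  Then
`P_{Cε} x = (1 − ε/‖x − P_C x‖) P_C x + (ε/‖x − P_C x‖) x`. -/
theorem stmt0 {H : Type*} [NormedAddCommGroup H] [InnerProductSpace ℝ H] [CompleteSpace H]
    (C : Set H) (hCne : C.Nonempty) (hCcl : IsClosed C) (hCcv : Convex ℝ C)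
    (ε : ℝ) (hε : 0 ≤ ε)
    (PC : H → H) (hPC : IsMetricProj C PC)
    (Pε : H → H) (hPε : IsMetricProj {y : H | infDist y C ≤ ε} Pε)
    (x : H) (hx : x ∉ {y : H | infDist y C ≤ ε}) :
    Pε x = (1 - ε / ‖x - PC x‖) • PC x + (ε / ‖x - PC x‖) • x := by
  set s : Set H := {y : H | infDist y C ≤ ε} with hs
  -- s is the closed thickening, hence convex
  have hseq : s = cthickening ε C := by
    ext y
    rw [mem_cthickening_iff]
    simp only [hs, Set.mem_setOf_eq, infDist]
    rw [ENNReal.le_ofReal_iff_toReal_le (infEdist_ne_top hCne) hε]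
  have hscv : Convex ℝ s := hseq ▸ hCcv.cthickening ε
  set p := PC x with hp
  obtain ⟨hpC, hpmin⟩ := hPC x
  set D := ‖x - p‖ with hD
  -- D equals infDist x C
  have hDinf : infDist x C = D := by
    apply le_antisymm
    · simpa [dist_eq_norm] using infDist_le_dist_of_mem hpC
    · by_contra h
      obtain ⟨y, hyC, hyd⟩ := (infDist_lt_iff hCne).1 (not_le.1 h)
      rw [dist_eq_norm] at hyd
      exact absurd (hpmin y hyC) (not_le.2 hyd)
  have hεD : ε < D := by
    have hx' : ε < infDist x C := not_le.1 hx
    rwa [hDinf] at hx'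
  have hD0 : 0 < D := lt_of_le_of_lt hε hεD
  set q : H := (1 - ε / D) • p + (ε / D) • x with hq
  -- key norm computations
  have hqp : q - p = (ε / D) • (x - p) := by
    rw [hq]; module
  have hxq : x - q = (1 - ε / D) • (x - p) := by
    rw [hq]; module
  have hnqp : ‖q - p‖ = ε := by
    rw [hqp, norm_smul, Real.norm_eq_abs, abs_of_nonneg (by positivity), ← hD]
    field_simp
  have hnxq : ‖x - q‖ = D - ε := by
    have h1 : (0:ℝ) ≤ 1 - ε / D := by
      rw [sub_nonneg, div_le_one hD0]; exact hεD.le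
    rw [hxq, norm_smul, Real.norm_eq_abs, abs_of_nonneg h1, ← hD]
    field_simp
  have hqs : q ∈ s := by
    have := infDist_le_dist_of_mem (x := q) hpC
    rw [dist_eq_norm, hnqp] at this
    exact this
  obtain ⟨hPεs, hPεmin⟩ := hPε x
  -- the projection onto s is at distance D - ε from x as well
  have h2 : ‖x - Pε x‖ ≤ D - ε := hnxq ▸ hPεmin q hqs
  have h3 : D - ε ≤ ‖x - Pε x‖ := by
    have := infDist_le_infDist_add_dist (x := x) (y := Pε x) (s := C)
    rw [hDinf, dist_eq_norm] at this
    have hPd : infDist (Pε x) C ≤ ε := hPεs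
    linarith
  have heq : ‖x - Pε x‖ = D - ε := le_antisymm h2 h3
  -- uniqueness of the closest point by convexity (parallelogram law)
  set m : H := (1/2 : ℝ) • Pε x + (1/2 : ℝ) • q with hm
  have hms : m ∈ s := hscv hPεs hqs (by norm_num) (by norm_num) (by norm_num)
  have hxm : D - ε ≤ ‖x - m‖ := by
    have := infDist_le_infDist_add_dist (x := x) (y := m) (s := C)
    rw [hDinf, dist_eq_norm] at this
    have : infDist m C ≤ ε := hms
    have := infDist_le_infDist_add_dist (x := x) (y := m) (s := C)
    rw [hDinf, dist_eq_norm] at this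
    have hmC : infDist m C ≤ ε := hms
    linarith
  -- parallelogram law
  have hpar := parallelogram_law_with_norm ℝ (x - Pε x) (x - q)
  have hsum : (x - Pε x) + (x - q) = (2 : ℝ) • (x - m) := by
    rw [hm]; module
  have hdiff : (x - Pε x) - (x - q) = q - Pε x := by abel
  rw [hsum, hdiff, heq, hnxq, norm_smul] at hpar
  simp only [Real.norm_ofNat] at hpar
  have h5 : (D - ε) * (D - ε) ≤ ‖x - m‖ * ‖x - m‖ :=
    mul_le_mul hxm hxm (by linarith) (norm_nonneg _)
  have h6 : ‖q - Pε x‖ * ‖q - Pε x‖ ≤ 0 := by nlinarith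
  have h7 : q - Pε x = 0 :=
    norm_eq_zero.1 (mul_self_eq_zero.1 (le_antisymm h6 (mul_self_nonneg _)))
  have hqP : q = Pε x := sub_eq_zero.1 h7
  rw [← hqP, hq, hp, hD]
end

section
/- Let C be a nonempty, closed and convex subset of a real Hilbert space H, let ε ≥ 0, let C_ε = {x ∈ H : d(x,C) ≤ ε}, and let x ∈ H \ C_ε. Then d(x,C) = d(x,C_ε) + ε. -/
/-! In a real normed space, walking from `x` along a segment towards a nearly closest point of `C`
shows that the distance from `x` to the closed `ε`-thickening of `C` is exactly `d(x, C) - ε`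
(Mathlib's `Metric.infEDist_cthickening`); for `x` outside the thickening this subtraction does
not truncate. -/

open Metric

namespace Metric

theorem mem_cthickening_iff_infDist_le {α : Type*} [PseudoMetricSpace α] {δ : ℝ} {E : Set α}
    {x : α} (hE : E.Nonempty) (hδ : 0 ≤ δ) : x ∈ cthickening δ E ↔ infDist x E ≤ δ := by
  rw [mem_cthickening_iff, infDist, ← ENNReal.le_ofReal_iff_toReal_le (infEDist_ne_top hE) hδ]

theorem infDist_cthickening {E : Type*} [SeminormedAddCommGroup E] [NormedSpace ℝ E] {δ : ℝ}
    {s : Set E} {x : E} (hs : s.Nonempty) (hδ : 0 ≤ δ) (hx : δ ≤ infDist x s) :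
    infDist x (cthickening δ s) = infDist x s - δ := by
  rw [infDist, infEDist_cthickening,
    ENNReal.toReal_sub_of_le (ENNReal.ofReal_le_of_le_toReal hx) (infEDist_ne_top hs),
    ENNReal.toReal_ofReal hδ, infDist]

end Metric

theorem stmt1_general {H : Type*} [NormedAddCommGroup H] [InnerProductSpace ℝ H]
    (C : Set H) (hCne : C.Nonempty)
    (ε : ℝ) (hε : 0 ≤ ε)
    (x : H) (hx : x ∉ {y : H | infDist y C ≤ ε}) :
    infDist x C = infDist x {y : H | infDist y C ≤ ε} + ε := by
  have hCε : {y : H | infDist y C ≤ ε} = cthickening ε C :=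
    Set.ext fun _ => (mem_cthickening_iff_infDist_le hCne hε).symm
  have hxC : ε < infDist x C := not_le.mp hx
  rw [hCε, infDist_cthickening hCne hε hxC.le]
  ring

/-- Let `C` be a nonempty, closed and convex subset of a real Hilbert space `H`, let `ε ≥ 0`,
let `Cε = {y : d(y,C) ≤ ε}` and let `x ∈ H \ Cε`.  Then `d(x,C) = d(x,Cε) + ε`. -/
theorem stmt1 {H : Type*} [NormedAddCommGroup H] [InnerProductSpace ℝ H] [CompleteSpace H]
    (C : Set H) (hCne : C.Nonempty) (hCcl : IsClosed C) (hCcv : Convex ℝ C)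
    (ε : ℝ) (hε : 0 ≤ ε)
    (x : H) (hx : x ∉ {y : H | infDist y C ≤ ε}) :
    infDist x C = infDist x {y : H | infDist y C ≤ ε} + ε :=
  stmt1_general C hCne ε hε x hx
end

section
/- Let C_i ⊆ H, i ∈ I := {1,…,M}, be closed and convex sets in a real Hilbert space H with C := ⋂_{i∈I} C_i ≠ ∅. Let U := Σ_{n=1}^{N} ω_n ∏_{j∈J_n} P_{C_j}, where each J_n ⊆ I is a string (finite ordered tuple of indices), ω_n ∈ (0,1), Σ_{n=1}^{N} ω_n = 1, and I = J_1 ∪ … ∪ J_N. Then U is (1/m)-strongly quasi-nonexpansive, where m := max_{1≤n≤N} |J_n|, and Fix U = C. -/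
open Metric

/-- For a string `J = (j_1, …, j_l)`, `stringProd P J = P j_l ∘ ⋯ ∘ P j_1`. -/
def stringProd {H : Type*} {M : ℕ} (P : Fin M → H → H) : List (Fin M) → H → H
  | [] => id
  | j :: J => fun x => stringProd P J (P j x)

/-!
Each projection `P` onto a convex set `C` satisfies `‖P x - c‖² ≤ ‖x - c‖² - ‖x - P x‖²` for
`c ∈ C`. Chaining this along a string `J` shows that `‖∏_J P x - c‖² ≤ ‖x - c‖² - s`, where `s` is
the sum of the squared step lengths of the string, while by Cauchy–Schwarz the total
displacement satisfies `‖x - ∏_J P x‖² ≤ |J| s`. Averaging over the strings with the convexity of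
`‖·‖²` gives `‖U y - c‖² ≤ ‖y - c‖² - S` and `‖y - U y‖² ≤ m S` for the averaged step sum `S`,
which is the strong quasi-nonexpansiveness once `Fix U = C` is known. For that, `U z = z` forces
`S = 0`, so every projection in every string fixes `z`, and the strings cover all indices.
-/

theorem sq_add_le_of_sq_le_mul {a b s l : ℝ} (hl : 0 ≤ l) (hs : 0 ≤ s) (hb : b ^ 2 ≤ l * s) :
    (a + b) ^ 2 ≤ (l + 1) * (a ^ 2 + s) := by
  rcases hl.eq_or_lt with rfl | hl
  · have : b = 0 := by nlinarith
    subst this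
    nlinarith
  · -- `l (l a² - 2ab + s) ≥ (l a - b)² ≥ 0`
    have : 0 ≤ l * a ^ 2 - 2 * a * b + s := by
      refine nonneg_of_mul_nonneg_right ?_ hl
      nlinarith [sq_nonneg (l * a - b)]
    nlinarith

theorem IsMetricProj.norm_apply_sub_sq_le {H : Type*} [NormedAddCommGroup H]
    [InnerProductSpace ℝ H] {C : Set H} {P : H → H} (hP : IsMetricProj C P)
    (hC : Convex ℝ C) (x : H) {c : H} (hc : c ∈ C) :
    ‖P x - c‖ ^ 2 ≤ ‖x - c‖ ^ 2 - ‖x - P x‖ ^ 2 := by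
  obtain ⟨hPx, hmin⟩ := hP x
  have : Nonempty C := ⟨⟨P x, hPx⟩⟩
  have hinf : ‖x - P x‖ = ⨅ z : C, ‖x - z‖ :=
    le_antisymm (le_ciInf fun z => hmin z z.2)
      (ciInf_le ⟨0, Set.forall_mem_range.2 fun _ => norm_nonneg _⟩ (⟨P x, hPx⟩ : C))
  have hinner : inner ℝ (x - P x) (c - P x) ≤ 0 :=
    (norm_eq_iInf_iff_real_inner_le_zero hC hPx).1 hinf c hc
  have hexpand := norm_sub_sq_real (x - P x) (c - P x)
  rw [sub_sub_sub_cancel_right, norm_sub_rev c] at hexpand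
  linarith

section StringAveraging

variable {H : Type*}

theorem stringProd_eq_self {M : ℕ} {P : Fin M → H → H} {c : H} (hc : ∀ j, P j c = c) :
    ∀ J : List (Fin M), stringProd P J c = c
  | [] => rfl
  | j :: J => by
    change stringProd P J (P j c) = c
    rw [hc j, stringProd_eq_self hc J]

variable [NormedAddCommGroup H]

theorem IsMetricProj.apply_eq_self {C : Set H} {P : H → H} (hP : IsMetricProj C P) {c : H}
    (hc : c ∈ C) : P c = c := by
  have h := (hP c).2 c hc
  rw [sub_self, norm_zero, norm_le_zero_iff, sub_eq_zero] at h
  exact h.symm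

variable {M : ℕ}

/-- `sumSqSteps P J x` is `∑ₖ ‖xₖ₋₁ - xₖ‖²` along the trajectory `x₀ = x`, `xₖ = P jₖ xₖ₋₁`. -/
def sumSqSteps (P : Fin M → H → H) : List (Fin M) → H → ℝ
  | [], _ => 0
  | j :: J, x => ‖x - P j x‖ ^ 2 + sumSqSteps P J (P j x)

theorem sumSqSteps_nonneg (P : Fin M → H → H) : ∀ (J : List (Fin M)) (x : H),
    0 ≤ sumSqSteps P J x
  | [], _ => le_rfl
  | j :: J, x => add_nonneg (sq_nonneg _) (sumSqSteps_nonneg P J (P j x))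

theorem apply_eq_self_of_sumSqSteps_eq_zero (P : Fin M → H → H) : ∀ {J : List (Fin M)} {x : H},
    sumSqSteps P J x = 0 → ∀ j ∈ J, P j x = x
  | [], _, _, _, hj => absurd hj List.not_mem_nil
  | j :: J, x, h, k, hk => by
    rw [sumSqSteps, add_eq_zero_iff_of_nonneg (sq_nonneg _) (sumSqSteps_nonneg P J _)] at h
    have hfix : P j x = x := by
      rw [eq_comm, ← sub_eq_zero, ← norm_eq_zero, ← pow_eq_zero_iff two_ne_zero]
      exact h.1
    rcases List.mem_cons.1 hk with rfl | hk
    · exact hfix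
    · rw [hfix] at h
      exact apply_eq_self_of_sumSqSteps_eq_zero P h.2 k hk

theorem mem_iInter_of_sum_sumSqSteps_nonpos {N : ℕ} {Cset : Fin M → Set H} {P : Fin M → H → H}
    {J : Fin N → List (Fin M)} {w : Fin N → ℝ}
    (hP : ∀ i, IsMetricProj (Cset i) (P i)) (hw : ∀ n, 0 < w n) (hcover : ∀ i, ∃ n, i ∈ J n)
    {z : H} (hz : ∑ n, w n * sumSqSteps P (J n) z ≤ 0) : z ∈ ⋂ i, Cset i := by
  have hnonneg : ∀ n ∈ Finset.univ, 0 ≤ w n * sumSqSteps P (J n) z :=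
    fun n _ => mul_nonneg (hw n).le (sumSqSteps_nonneg P _ z)
  have hzero :=
    (Finset.sum_eq_zero_iff_of_nonneg hnonneg).1 (hz.antisymm (Finset.sum_nonneg hnonneg))
  refine Set.mem_iInter.2 fun i => ?_
  obtain ⟨n, hin⟩ := hcover i
  have hn := (mul_eq_zero.1 (hzero n (Finset.mem_univ n))).resolve_left (hw n).ne'
  rw [← apply_eq_self_of_sumSqSteps_eq_zero P hn i hin]
  exact (hP i z).1

theorem norm_stringProd_sub_sq_le {P : Fin M → H → H} {c : H}
    (hP : ∀ j x, ‖P j x - c‖ ^ 2 ≤ ‖x - c‖ ^ 2 - ‖x - P j x‖ ^ 2) :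
    ∀ (J : List (Fin M)) (x : H), ‖stringProd P J x - c‖ ^ 2 ≤ ‖x - c‖ ^ 2 - sumSqSteps P J x
  | [], x => by simp [stringProd, sumSqSteps]
  | j :: J, x => by
    have := norm_stringProd_sub_sq_le hP J (P j x)
    rw [stringProd, sumSqSteps]
    linarith [hP j x]

theorem norm_sub_stringProd_sq_le (P : Fin M → H → H) : ∀ (J : List (Fin M)) (x : H),
    ‖x - stringProd P J x‖ ^ 2 ≤ J.length * sumSqSteps P J x
  | [], x => by simp [stringProd]
  | j :: J, x => by
    rw [stringProd, sumSqSteps, List.length_cons, Nat.cast_succ]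
    calc ‖x - stringProd P J (P j x)‖ ^ 2
        ≤ (‖x - P j x‖ + ‖P j x - stringProd P J (P j x)‖) ^ 2 :=
          pow_le_pow_left₀ (norm_nonneg _) (norm_sub_le_norm_sub_add_norm_sub _ _ _) 2
      _ ≤ _ := sq_add_le_of_sq_le_mul (Nat.cast_nonneg _) (sumSqSteps_nonneg P J _)
          (norm_sub_stringProd_sq_le P J (P j x))

variable [NormedSpace ℝ H]

theorem norm_sum_smul_sub_sq_le {ι : Type*} {s : Finset ι} {w : ι → ℝ} (hw : ∀ n ∈ s, 0 ≤ w n)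
    (hws : ∑ n ∈ s, w n = 1) (v : ι → H) (c : H) :
    ‖∑ n ∈ s, w n • v n - c‖ ^ 2 ≤ ∑ n ∈ s, w n * ‖v n - c‖ ^ 2 := by
  have hconv : ConvexOn ℝ Set.univ fun x : H => ‖x‖ ^ 2 :=
    convexOn_univ_norm.pow (fun _ _ => norm_nonneg _) 2
  have hsub : ∑ n ∈ s, w n • v n - c = ∑ n ∈ s, w n • (v n - c) := by
    simp only [smul_sub, Finset.sum_sub_distrib, ← Finset.sum_smul, hws, one_smul]
  rw [hsub]
  exact hconv.map_sum_le hw hws fun _ _ => Set.mem_univ _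

variable {N : ℕ} {P : Fin M → H → H} {J : Fin N → List (Fin M)} {w : Fin N → ℝ}

theorem norm_stringAverage_sub_sq_le (hw : ∀ n, 0 ≤ w n) (hws : ∑ n, w n = 1) {c : H}
    (hP : ∀ j x, ‖P j x - c‖ ^ 2 ≤ ‖x - c‖ ^ 2 - ‖x - P j x‖ ^ 2) (y : H) :
    ‖∑ n, w n • stringProd P (J n) y - c‖ ^ 2 ≤
      ‖y - c‖ ^ 2 - ∑ n, w n * sumSqSteps P (J n) y :=
  calc _ ≤ ∑ n, w n * ‖stringProd P (J n) y - c‖ ^ 2 :=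
        norm_sum_smul_sub_sq_le (fun n _ => hw n) hws _ c
    _ ≤ ∑ n, w n * (‖y - c‖ ^ 2 - sumSqSteps P (J n) y) := by
        gcongr with n
        · exact hw n
        · exact norm_stringProd_sub_sq_le hP (J n) y
    _ = _ := by simp only [mul_sub, Finset.sum_sub_distrib, ← Finset.sum_mul, hws, one_mul]

theorem norm_sub_stringAverage_sq_le (hw : ∀ n, 0 ≤ w n) (hws : ∑ n, w n = 1) {m : ℕ}
    (hJm : ∀ n, (J n).length ≤ m) (y : H) :
    ‖y - ∑ n, w n • stringProd P (J n) y‖ ^ 2 ≤ m * ∑ n, w n * sumSqSteps P (J n) y :=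
  calc _ ≤ ∑ n, w n * ‖stringProd P (J n) y - y‖ ^ 2 := by
        rw [norm_sub_rev]
        exact norm_sum_smul_sub_sq_le (fun n _ => hw n) hws _ y
    _ ≤ ∑ n, w n * (m * sumSqSteps P (J n) y) := by
        gcongr with n
        · exact hw n
        · rw [norm_sub_rev]
          exact (norm_sub_stringProd_sq_le P (J n) y).trans <| by
            gcongr
            · exact sumSqSteps_nonneg P _ y
            · exact hJm n
    _ = _ := by simp only [Finset.mul_sum, mul_left_comm]

end StringAveraging

theorem stmt2_general {H : Type*} [NormedAddCommGroup H] [InnerProductSpace ℝ H]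
    {M N : ℕ}
    (Cset : Fin M → Set H) (hCcv : ∀ i, Convex ℝ (Cset i))
    (hCne : (⋂ i, Cset i).Nonempty)
    (P : Fin M → H → H) (hP : ∀ i, IsMetricProj (Cset i) (P i))
    (J : Fin N → List (Fin M)) (w : Fin N → ℝ)
    (hw : ∀ n, w n ∈ Set.Ioo (0 : ℝ) 1) (hws : ∑ n, w n = 1)
    (hcover : ∀ i : Fin M, ∃ n, i ∈ J n)
    (U : H → H) (hU : ∀ y, U y = ∑ n, w n • stringProd P (J n) y)
    (m : ℕ) (hm : m = Finset.univ.sup fun n => (J n).length) :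
    (∀ y : H, ∀ z ∈ Function.fixedPoints U,
        ‖U y - z‖ ^ 2 ≤ ‖y - z‖ ^ 2 - (1 / (m : ℝ)) * ‖y - U y‖ ^ 2) ∧
      Function.fixedPoints U = ⋂ i, Cset i := by
  have hw0 n : 0 ≤ w n := (hw n).1.le
  have hdecr : ∀ y, ∀ c ∈ ⋂ i, Cset i,
      ‖U y - c‖ ^ 2 ≤ ‖y - c‖ ^ 2 - ∑ n, w n * sumSqSteps P (J n) y := fun y c hc =>
    hU y ▸ norm_stringAverage_sub_sq_le hw0 hws
      (fun j x => (hP j).norm_apply_sub_sq_le (hCcv j) x (Set.mem_iInter.1 hc j)) y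
  have hFix : Function.fixedPoints U = ⋂ i, Cset i := by
    refine Set.Subset.antisymm (fun z hz => ?_) fun c hc => ?_
    · obtain ⟨c, hc⟩ := hCne
      have := hdecr z c hc
      rw [hz.eq] at this
      exact mem_iInter_of_sum_sumSqSteps_nonpos hP (fun n => (hw n).1) hcover (by linarith)
    · have hfix j : P j c = c := (hP j).apply_eq_self (Set.mem_iInter.1 hc j)
      change U c = c
      simp only [hU, stringProd_eq_self hfix, ← Finset.sum_smul, hws, one_smul]
  refine ⟨fun y z hz => ?_, hFix⟩
  have hmove := norm_sub_stringAverage_sq_le (P := P) hw0 hws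
    (fun n => hm ▸ Finset.le_sup (f := fun n => (J n).length) (Finset.mem_univ n)) y
  rw [← hU] at hmove
  have := div_le_of_le_mul₀ (Nat.cast_nonneg m)
    (Finset.sum_nonneg fun n _ => mul_nonneg (hw0 n) (sumSqSteps_nonneg P (J n) y))
    (hmove.trans_eq (mul_comm _ _))
  rw [one_div_mul_eq_div]
  linarith [hdecr y z (hFix ▸ hz)]

/-- The string averaging projection operator
`U = Σ_{n=1}^{N} ω_n ∏_{j ∈ J_n} P_{C_j}` (with strings covering `I = {1,…,M}`)
is `(1/m)`-strongly quasi-nonexpansive, where `m = max_n |J_n|`, and `Fix U = C = ⋂_i C_i`. -/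
theorem stmt2 {H : Type*} [NormedAddCommGroup H] [InnerProductSpace ℝ H] [CompleteSpace H]
    {M N : ℕ} [NeZero M] [NeZero N]
    (Cset : Fin M → Set H) (hCcl : ∀ i, IsClosed (Cset i)) (hCcv : ∀ i, Convex ℝ (Cset i))
    (hCne : (⋂ i, Cset i).Nonempty)
    (P : Fin M → H → H) (hP : ∀ i, IsMetricProj (Cset i) (P i))
    (J : Fin N → List (Fin M)) (w : Fin N → ℝ)
    (hw : ∀ n, w n ∈ Set.Ioo (0 : ℝ) 1) (hws : ∑ n, w n = 1)
    (hcover : ∀ i : Fin M, ∃ n, i ∈ J n)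
    (U : H → H) (hU : ∀ y, U y = ∑ n, w n • stringProd P (J n) y)
    (m : ℕ) (hm : m = Finset.univ.sup fun n => (J n).length) :
    (∀ y : H, ∀ z ∈ Function.fixedPoints U,
        ‖U y - z‖ ^ 2 ≤ ‖y - z‖ ^ 2 - (1 / (m : ℝ)) * ‖y - U y‖ ^ 2) ∧
      Function.fixedPoints U = ⋂ i, Cset i :=
  stmt2_general Cset hCcv hCne P hP J w hw hws hcover U hU m hm
end

section
/- Let C_i ⊆ H, i ∈ I := {1,…,M}, be closed and convex sets in a real Hilbert space H with C := ⋂_{i∈I} C_i ≠ ∅. Let U := Σ_{n=1}^{N} ω_n ∏_{j∈J_n} P_{C_j}, where each J_n ⊆ I is a string, ω_n ∈ (0,1), Σ_{n=1}^{N} ω_n = 1, and I = J_1 ∪ … ∪ J_N. Set m := max_{1≤n≤N} |J_n| and ω := min_{1≤n≤N} ω_n. If the family {C_i : i ∈ I} is κ-linearly regular over a set S ⊆ H, then for all x ∈ S one has ‖Ux − x‖ ≥ (ω/(2mκ²)) d(x,C). -/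
/-!
Fix `z ∈ C`. A projection onto a convex `C_j ∋ z` satisfies
`‖P y - z‖² + ‖y - P y‖² ≤ ‖y - z‖²`, so along a string the squared distance to `z` drops by at
least the sum of the squared step lengths. By Cauchy–Schwarz, for every `i ∈ J`,
`d(x, C_i)² ≤ |J| (‖x - z‖² - ‖T_J x - z‖²) ≤ 2|J| ⟪x - T_J x, x - z⟫`. Averaging over the
strings gives `ω d(x, C_i)² ≤ 2m ⟪x - U x, x - z⟫ ≤ 2m ‖U x - x‖ ‖x - z‖`; for `i` with maximal
`d(x, C_i)` linear regularity turns the left side into `ω d(x, C)² / κ²`, and taking the infimum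
over `z ∈ C` concludes.
-/

open Metric

open scoped RealInnerProductSpace

theorem sq_add_le_succ_mul_sq_add {a b c l : ℝ} (hl : 0 ≤ l) (hc : 0 ≤ c)
    (hb : b ^ 2 ≤ l * c) :
    (a + b) ^ 2 ≤ (l + 1) * (a ^ 2 + c) := by
  rcases hl.eq_or_lt with rfl | hl
  · have hb0 : b = 0 := by nlinarith [sq_nonneg b]
    subst hb0
    nlinarith
  · -- `l (l + 1)(a² + c) - l (a + b)² ≥ (l a - b)²`
    nlinarith [sq_nonneg (l * a - b), mul_le_mul_of_nonneg_left hb hl.le]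

theorem le_mul_infDist_of_forall_le_mul_dist {α : Type*} [PseudoMetricSpace α] {s : Set α}
    (hs : s.Nonempty) {x : α} {a b : ℝ} (hb : 0 ≤ b) (h : ∀ z ∈ s, a ≤ b * dist x z) :
    a ≤ b * infDist x s := by
  rcases hb.eq_or_lt with rfl | hb
  · obtain ⟨z, hz⟩ := hs
    simpa using h z hz
  rw [mul_comm, ← div_le_iff₀ hb, le_infDist hs]
  intro z hz
  rw [div_le_iff₀ hb, mul_comm]
  exact h z hz

section InnerProductSpace

variable {H : Type*} [NormedAddCommGroup H] [InnerProductSpace ℝ H]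

theorem norm_sub_sq_sub_norm_sub_sq_le_two_inner (x y z : H) :
    ‖x - z‖ ^ 2 - ‖y - z‖ ^ 2 ≤ 2 * ⟪x - y, x - z⟫ := by
  have h := norm_sub_sq_real (x - z) (x - y)
  rw [sub_sub_sub_cancel_left, real_inner_comm] at h
  nlinarith [sq_nonneg ‖x - y‖]

theorem inner_sub_sum_smul {ι : Type*} [Fintype ι] (w : ι → ℝ) (hw : ∑ n, w n = 1)
    (x v : H) (y : ι → H) :
    ⟪x - ∑ n, w n • y n, v⟫ = ∑ n, w n * ⟪x - y n, v⟫ := by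
  have hx : x - ∑ n, w n • y n = ∑ n, w n • (x - y n) := by
    simp only [smul_sub, Finset.sum_sub_distrib, ← Finset.sum_smul, hw, one_smul]
  rw [hx, sum_inner]
  simp only [real_inner_smul_left]

namespace IsMetricProj

variable {C : Set H} {P : H → H}

theorem inner_sub_le_zero (hC : Convex ℝ C) (hP : IsMetricProj C P) (x : H) {z : H}
    (hz : z ∈ C) : ⟪x - P x, z - P x⟫ ≤ 0 := by
  have : Nonempty C := ⟨⟨P x, (hP x).1⟩⟩
  refine (norm_eq_iInf_iff_real_inner_le_zero hC (hP x).1).mp ?_ z hz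
  refine le_antisymm (le_ciInf fun w => (hP x).2 w w.2) ?_
  exact ciInf_le ⟨0, Set.forall_mem_range.2 fun _ => norm_nonneg _⟩ (⟨P x, (hP x).1⟩ : C)

theorem norm_sub_sq_add_norm_sub_sq_le (hC : Convex ℝ C) (hP : IsMetricProj C P) (x : H)
    {z : H} (hz : z ∈ C) : ‖P x - z‖ ^ 2 + ‖x - P x‖ ^ 2 ≤ ‖x - z‖ ^ 2 := by
  have h := norm_sub_sq_real (x - P x) (z - P x)
  rw [sub_sub_sub_cancel_right, norm_sub_rev z] at h
  linarith [hP.inner_sub_le_zero hC x hz]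

end IsMetricProj

section Strings

variable {M : ℕ} {C : Fin M → Set H} {P : Fin M → H → H} {z : H}

theorem norm_stringProd_sub_sq_le_s4 (hC : ∀ i, Convex ℝ (C i))
    (hP : ∀ i, IsMetricProj (C i) (P i)) (hz : ∀ i, z ∈ C i) (L : List (Fin M)) (x : H) :
    ‖stringProd P L x - z‖ ^ 2 ≤ ‖x - z‖ ^ 2 := by
  induction L generalizing x with
  | nil => rfl
  | cons j L ih =>
    have hj := (hP j).norm_sub_sq_add_norm_sub_sq_le (hC j) x (hz j)
    exact (ih (P j x)).trans (by nlinarith [sq_nonneg ‖x - P j x‖])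

theorem infDist_sq_le_length_mul (hC : ∀ i, Convex ℝ (C i))
    (hP : ∀ i, IsMetricProj (C i) (P i)) (hz : ∀ i, z ∈ C i) (L : List (Fin M)) (x : H)
    {i : Fin M} (hi : i ∈ L) :
    infDist x (C i) ^ 2 ≤ L.length * (‖x - z‖ ^ 2 - ‖stringProd P L x - z‖ ^ 2) := by
  induction L generalizing x with
  | nil => simp at hi
  | cons j L ih =>
    set y := P j x
    set B := ‖stringProd P L y - z‖ ^ 2
    have hstep := (hP j).norm_sub_sq_add_norm_sub_sq_le (hC j) x (hz j)
    have hfejer : B ≤ ‖y - z‖ ^ 2 := norm_stringProd_sub_sq_le_s4 hC hP hz L y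
    obtain ⟨b, hb0, hxb, hb⟩ : ∃ b, 0 ≤ b ∧ infDist x (C i) ≤ ‖x - y‖ + b ∧
        b ^ 2 ≤ L.length * (‖y - z‖ ^ 2 - B) := by
      rcases List.mem_cons.mp hi with rfl | hi
      · refine ⟨0, le_rfl, ?_, ?_⟩
        · simpa [← dist_eq_norm] using infDist_le_dist_of_mem (hP i x).1
        · simpa using mul_nonneg (Nat.cast_nonneg L.length) (sub_nonneg.mpr hfejer)
      · refine ⟨infDist y (C i), infDist_nonneg, ?_, ih y hi⟩
        simpa [add_comm, dist_eq_norm] using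
          infDist_le_infDist_add_dist (s := C i) (x := x) (y := y)
    calc infDist x (C i) ^ 2 ≤ (‖x - y‖ + b) ^ 2 := pow_le_pow_left₀ infDist_nonneg hxb 2
      _ ≤ (L.length + 1) * (‖x - y‖ ^ 2 + (‖y - z‖ ^ 2 - B)) :=
        sq_add_le_succ_mul_sq_add (Nat.cast_nonneg _) (sub_nonneg.mpr hfejer) hb
      _ ≤ (L.length + 1) * (‖x - z‖ ^ 2 - B) := by gcongr; linarith
      _ = _ := by simp [stringProd, y, B]

theorem inner_sub_stringProd_nonneg (hC : ∀ i, Convex ℝ (C i))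
    (hP : ∀ i, IsMetricProj (C i) (P i)) (hz : ∀ i, z ∈ C i) (L : List (Fin M)) (x : H) :
    0 ≤ ⟪x - stringProd P L x, x - z⟫ := by
  linarith [norm_sub_sq_sub_norm_sub_sq_le_two_inner x (stringProd P L x) z,
    norm_stringProd_sub_sq_le_s4 hC hP hz L x]

theorem infDist_sq_le_two_length_mul_inner (hC : ∀ i, Convex ℝ (C i))
    (hP : ∀ i, IsMetricProj (C i) (P i)) (hz : ∀ i, z ∈ C i) (L : List (Fin M)) (x : H)
    {i : Fin M} (hi : i ∈ L) :
    infDist x (C i) ^ 2 ≤ 2 * L.length * ⟪x - stringProd P L x, x - z⟫ := by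
  have h := norm_sub_sq_sub_norm_sub_sq_le_two_inner x (stringProd P L x) z
  calc infDist x (C i) ^ 2
      ≤ L.length * (‖x - z‖ ^ 2 - ‖stringProd P L x - z‖ ^ 2) :=
        infDist_sq_le_length_mul hC hP hz L x hi
    _ ≤ L.length * (2 * ⟪x - stringProd P L x, x - z⟫) := by gcongr
    _ = _ := by ring

theorem mul_infDist_sq_le_norm_stringAverage_sub_mul {N : ℕ} (hC : ∀ i, Convex ℝ (C i))
    (hP : ∀ i, IsMetricProj (C i) (P i)) (hz : ∀ i, z ∈ C i) (J : Fin N → List (Fin M))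
    {w : Fin N → ℝ} (hw : ∀ n, 0 ≤ w n) (hws : ∑ n, w n = 1) (x : H) {n : Fin N}
    {i : Fin M} (hi : i ∈ J n) :
    w n * infDist x (C i) ^ 2 ≤
      2 * (J n).length * (‖∑ k, w k • stringProd P (J k) x - x‖ * ‖x - z‖) := by
  calc w n * infDist x (C i) ^ 2
      ≤ w n * (2 * (J n).length * ⟪x - stringProd P (J n) x, x - z⟫) := by
        gcongr
        · exact hw n
        · exact infDist_sq_le_two_length_mul_inner hC hP hz (J n) x hi
    _ = 2 * (J n).length * (w n * ⟪x - stringProd P (J n) x, x - z⟫) := by ring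
    _ ≤ 2 * (J n).length * ∑ k, w k * ⟪x - stringProd P (J k) x, x - z⟫ := by
        gcongr
        exact Finset.single_le_sum (fun k _ => mul_nonneg (hw k)
          (inner_sub_stringProd_nonneg hC hP hz (J k) x)) (Finset.mem_univ n)
    _ = 2 * (J n).length * ⟪x - ∑ k, w k • stringProd P (J k) x, x - z⟫ := by
        rw [inner_sub_sum_smul w hws]
    _ ≤ _ := by
        rw [norm_sub_rev _ x]
        gcongr
        exact real_inner_le_norm _ _

end Strings

end InnerProductSpace

theorem stmt4_general {H : Type*} [NormedAddCommGroup H] [InnerProductSpace ℝ H]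
    {M N : ℕ} [NeZero M]
    (Cset : Fin M → Set H) (hCcv : ∀ i, Convex ℝ (Cset i))
    (hCne : (⋂ i, Cset i).Nonempty)
    (P : Fin M → H → H) (hP : ∀ i, IsMetricProj (Cset i) (P i))
    (J : Fin N → List (Fin M)) (w : Fin N → ℝ)
    (hw : ∀ n, w n ∈ Set.Ioo (0 : ℝ) 1) (hws : ∑ n, w n = 1)
    (hcover : ∀ i : Fin M, ∃ n, i ∈ J n)
    (U : H → H) (hU : ∀ y, U y = ∑ n, w n • stringProd P (J n) y)
    (m : ℕ) (hm : m = Finset.univ.sup fun n => (J n).length)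
    (ω : ℝ) (hω : ω = ⨅ n, w n)
    (S : Set H) (κ : ℝ) (hκ : 0 < κ)
    (hreg : ∀ x ∈ S, infDist x (⋂ i, Cset i) ≤ κ * ⨆ i, infDist x (Cset i)) :
    ∀ x ∈ S, ω / (2 * (m : ℝ) * κ ^ 2) * infDist x (⋂ i, Cset i) ≤ ‖U x - x‖ := by
  intro x hx
  obtain ⟨i, hi⟩ := exists_eq_ciSup_of_finite (f := fun i => infDist x (Cset i))
  obtain ⟨n, hn⟩ := hcover i
  have hω0 : 0 ≤ ω := hω ▸ Real.iInf_nonneg fun n => (hw n).1.le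
  have hωn : ω ≤ w n := hω ▸ ciInf_le (Finite.bddBelow_range w) n
  have hmn : (J n).length ≤ m :=
    hm ▸ Finset.le_sup (f := fun n => (J n).length) (Finset.mem_univ n)
  have hm0 : 0 < m := hmn.trans_lt' (List.length_pos_of_mem hn)
  set d := infDist x (⋂ i, Cset i)
  have hd : d ^ 2 ≤ κ ^ 2 * infDist x (Cset i) ^ 2 := by
    rw [← mul_pow]
    exact pow_le_pow_left₀ infDist_nonneg (hi ▸ hreg x hx) 2
  have hd0 : 0 ≤ d := infDist_nonneg
  rcases hd0.eq_or_lt with hd0 | hd0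
  · rw [← hd0, mul_zero]
    exact norm_nonneg _
  refine le_of_mul_le_mul_right ?_ hd0
  refine le_mul_infDist_of_forall_le_mul_dist hCne (norm_nonneg _) fun z hz => ?_
  rw [div_mul_eq_mul_div, div_mul_eq_mul_div, div_le_iff₀ (by positivity)]
  have hz : ∀ i, z ∈ Cset i := Set.mem_iInter.mp hz
  calc ω * d * d ≤ κ ^ 2 * (w n * infDist x (Cset i) ^ 2) := by nlinarith
    _ ≤ κ ^ 2 * (2 * (J n).length * (‖U x - x‖ * dist x z)) := by
        rw [hU, dist_eq_norm]
        exact mul_le_mul_of_nonneg_left (mul_infDist_sq_le_norm_stringAverage_sub_mul hCcv hP hz J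
          (fun n => (hw n).1.le) hws x hn) (sq_nonneg κ)
    _ ≤ κ ^ 2 * (2 * m * (‖U x - x‖ * dist x z)) := by gcongr
    _ = _ := by ring

/-- If the family `{C_i : i ∈ I}` is `κ`-linearly regular over `S ⊆ H`, then the string
averaging projection operator `U = Σ_{n=1}^{N} ω_n ∏_{j ∈ J_n} P_{C_j}` satisfies
`‖Ux − x‖ ≥ (ω/(2mκ²)) d(x,C)` for all `x ∈ S`, where `m = max_n |J_n|`, `ω = min_n ω_n`. -/
theorem stmt4 {H : Type*} [NormedAddCommGroup H] [InnerProductSpace ℝ H] [CompleteSpace H]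
    {M N : ℕ} [NeZero M] [NeZero N]
    (Cset : Fin M → Set H) (hCcl : ∀ i, IsClosed (Cset i)) (hCcv : ∀ i, Convex ℝ (Cset i))
    (hCne : (⋂ i, Cset i).Nonempty)
    (P : Fin M → H → H) (hP : ∀ i, IsMetricProj (Cset i) (P i))
    (J : Fin N → List (Fin M)) (w : Fin N → ℝ)
    (hw : ∀ n, w n ∈ Set.Ioo (0 : ℝ) 1) (hws : ∑ n, w n = 1)
    (hcover : ∀ i : Fin M, ∃ n, i ∈ J n)
    (U : H → H) (hU : ∀ y, U y = ∑ n, w n • stringProd P (J n) y)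
    (m : ℕ) (hm : m = Finset.univ.sup fun n => (J n).length)
    (ω : ℝ) (hω : ω = ⨅ n, w n)
    (S : Set H) (κ : ℝ) (hκ : 0 < κ)
    (hreg : ∀ x ∈ S, infDist x (⋂ i, Cset i) ≤ κ * ⨆ i, infDist x (Cset i)) :
    ∀ x ∈ S, ω / (2 * (m : ℝ) * κ ^ 2) * infDist x (⋂ i, Cset i) ≤ ‖U x - x‖ :=
  stmt4_general Cset hCcv hCne P hP J w hw hws hcover U hU m hm ω hω S κ hκ hreg
end

section
/- For every k = 0,1,2,…, let T_k : H → H be nonexpansive on a real Hilbert space H and let C ⊆ ⋂_k Fix T_k be nonempty, closed and convex. Let {e_k} ⊆ [0,∞) be summable and let {x^k} ⊆ H satisfy ‖x^{k+1} − T_k x^k‖ ≤ e_k for all k. Assume that for every i = 0,1,2,… there is x_i^∞ ∈ C such that T_k ⋯ T_i x^i converges weakly (as k → ∞) to x_i^∞. Then there is x^∞ ∈ C such that x_i^∞ → x^∞ in norm and x^k converges weakly to x^∞; moreover, for all y ∈ H and all integers k ≥ i ≥ 0, |⟨y, x^{k+1} − x^∞⟩| ≤ |⟨y, T_k ⋯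 T_i x^i − x_i^∞⟩| + 2‖y‖ Σ_{j=i}^{∞} e_j. -/
open Metric Filter Topology
open scoped RealInnerProductSpace

/-- `prodSeq T i x n = T_{i+n-1} ⋯ T_i x`; thus for `k ≥ i`, `prodSeq T i x (k - i)` is the
product `T_{k-1} ⋯ T_i` applied to `x`, and `prodSeq T i (x i) (k + 1 - i) = T_k ⋯ T_i x^i`. -/
def prodSeq {H : Type*} (T : ℕ → H → H) (i : ℕ) (x : H) : ℕ → H
  | 0 => x
  | n + 1 => T (i + n) (prodSeq T i x n)

/-- Perturbation resilience, weak convergence: if the unperturbed products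
`T_k ⋯ T_i x^i` converge weakly to points `x_i^∞ ∈ C`, then there is `x^∞ ∈ C` with
`x_i^∞ → x^∞` in norm, `x^k ⇀ x^∞`, and for all `y` and `k ≥ i`,
`|⟨y, x^{k+1} − x^∞⟩| ≤ |⟨y, T_k ⋯ T_i x^i − x_i^∞⟩| + 2‖y‖ Σ_{j=i}^∞ e_j`. -/
theorem stmt11 {H : Type*} [NormedAddCommGroup H] [InnerProductSpace ℝ H] [CompleteSpace H]
    (T : ℕ → H → H) (hT : ∀ k, ∀ y z : H, ‖T k y - T k z‖ ≤ ‖y - z‖)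
    (C : Set H) (hCne : C.Nonempty) (hCcl : IsClosed C) (hCcv : Convex ℝ C)
    (hfix : ∀ k, ∀ z ∈ C, T k z = z)
    (e : ℕ → ℝ) (he : ∀ k, 0 ≤ e k) (hesum : Summable e)
    (x : ℕ → H) (hx : ∀ k, ‖x (k + 1) - T k (x k)‖ ≤ e k)
    (xinf : ℕ → H) (hxinfC : ∀ i, xinf i ∈ C)
    (hweak : ∀ i, ∀ y : H,
      Tendsto (fun k => ⟪y, prodSeq T i (x i) (k - i)⟫) atTop (𝓝 ⟪y, xinf i⟫)) :
    ∃ xlim ∈ C, Tendsto xinf atTop (𝓝 xlim) ∧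
      (∀ y : H, Tendsto (fun k => ⟪y, x k⟫) atTop (𝓝 ⟪y, xlim⟫)) ∧
      ∀ y : H, ∀ i k : ℕ, i ≤ k →
        |⟪y, x (k + 1) - xlim⟫| ≤
          |⟪y, prodSeq T i (x i) (k + 1 - i) - xinf i⟫| + 2 * ‖y‖ * ∑' j, e (i + j) := by
  classical
  set S : ℕ → ℝ := fun i => ∑' j, e (i + j) with hSdef
  have hSsum : ∀ i, Summable fun j => e (i + j) := by
    intro i
    have := (summable_nat_add_iff i).2 hesum
    simpa [add_comm] using this
  have hSnonneg : ∀ i, 0 ≤ S i := fun i => tsum_nonneg fun j => he _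
  have hSsucc : ∀ n, S n = e n + S (n + 1) := by
    intro n
    have h1 : S n = e (n + 0) + ∑' j, e (n + (j + 1)) := Summable.tsum_eq_zero_add (hSsum n)
    have h2 : (∑' j, e (n + (j + 1))) = S (n + 1) := by
      apply tsum_congr; intro j; congr 1; omega
    rw [h1, h2, add_zero]
  have hSanti : Antitone S := by
    apply antitone_nat_of_succ_le
    intro n
    rw [hSsucc n]
    linarith [he n]
  have hStend : Tendsto S atTop (𝓝 0) := by
    have h1 := tendsto_sum_nat_add e
    have h2 : ∀ i, (∑' k, e (k + i)) = S i := by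
      intro i; apply tsum_congr; intro k; congr 1; omega
    simpa [funext h2] using h1
  -- key estimate : perturbed iterates stay close to unperturbed products
  have hkey : ∀ i n, ‖x (i + n) - prodSeq T i (x i) n‖ ≤ ∑ j ∈ Finset.range n, e (i + j) := by
    intro i n
    induction n with
    | zero => simp [prodSeq]
    | succ n ih =>
      have hsplit : x (i + (n + 1)) - prodSeq T i (x i) (n + 1) =
          (x (i + n + 1) - T (i + n) (x (i + n))) +
          (T (i + n) (x (i + n)) - T (i + n) (prodSeq T i (x i) n)) := by
        show x (i + (n + 1)) - T (i + n) (prodSeq T i (x i) n) = _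
        rw [show i + (n + 1) = i + n + 1 from rfl]
        abel
      calc ‖x (i + (n + 1)) - prodSeq T i (x i) (n + 1)‖
          ≤ ‖x (i + n + 1) - T (i + n) (x (i + n))‖ +
            ‖T (i + n) (x (i + n)) - T (i + n) (prodSeq T i (x i) n)‖ := by
            rw [hsplit]; exact norm_add_le _ _
        _ ≤ e (i + n) + ‖x (i + n) - prodSeq T i (x i) n‖ :=
            add_le_add (hx (i + n)) (hT (i + n) _ _)
        _ ≤ e (i + n) + ∑ j ∈ Finset.range n, e (i + j) := by linarith
        _ = ∑ j ∈ Finset.range (n + 1), e (i + j) := by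
            rw [Finset.sum_range_succ]; ring
  have hSb : ∀ i k, i ≤ k → ‖x k - prodSeq T i (x i) (k - i)‖ ≤ S i := by
    intro i k hik
    have h1 := hkey i (k - i)
    rw [Nat.add_sub_cancel' hik] at h1
    exact h1.trans (Summable.sum_le_tsum (Finset.range (k - i)) (fun j _ => he _) (hSsum i))
  -- Cauchy estimate on the xinf
  have hdiff : ∀ i i', i ≤ i' → ‖xinf i - xinf i'‖ ≤ S i + S i' := by
    intro i i' hii'
    have h1 : Tendsto (fun k =>
        ⟪xinf i - xinf i', prodSeq T i (x i) (k - i) - prodSeq T i' (x i') (k - i')⟫) atTop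
        (𝓝 ⟪xinf i - xinf i', xinf i - xinf i'⟫) := by
      have := (hweak i (xinf i - xinf i')).sub (hweak i' (xinf i - xinf i'))
      simpa only [inner_sub_right] using this
    have h2 : ⟪xinf i - xinf i', xinf i - xinf i'⟫ ≤ ‖xinf i - xinf i'‖ * (S i + S i') := by
      refine le_of_tendsto h1 ?_
      filter_upwards [eventually_ge_atTop i'] with k hk
      have hik : i ≤ k := hii'.trans hk
      calc ⟪xinf i - xinf i', prodSeq T i (x i) (k - i) - prodSeq T i' (x i') (k - i')⟫
          ≤ ‖xinf i - xinf i'‖ * ‖prodSeq T i (x i) (k - i) - prodSeq T i' (x i') (k - i')‖ :=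
            real_inner_le_norm _ _
        _ ≤ ‖xinf i - xinf i'‖ * (S i + S i') := by
            refine mul_le_mul_of_nonneg_left ?_ (norm_nonneg _)
            calc ‖prodSeq T i (x i) (k - i) - prodSeq T i' (x i') (k - i')‖
                ≤ ‖prodSeq T i (x i) (k - i) - x k‖ + ‖x k - prodSeq T i' (x i') (k - i')‖ :=
                  norm_sub_le_norm_sub_add_norm_sub _ _ _
              _ ≤ S i + S i' := by
                  have hb1 := hSb i k hik
                  have hb2 := hSb i' k hk
                  rw [norm_sub_rev] at hb1
                  linarith
    rw [real_inner_self_eq_norm_mul_norm] at h2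
    rcases (norm_nonneg (xinf i - xinf i')).eq_or_lt with h0 | h0
    · rw [← h0]; exact add_nonneg (hSnonneg i) (hSnonneg i')
    · exact le_of_mul_le_mul_left h2 h0
  have hcauchy : CauchySeq xinf := by
    apply cauchySeq_of_le_tendsto_0 (fun N => 2 * S N)
    · intro n m N hn hm
      rw [dist_eq_norm]
      rcases le_total n m with h | h
      · have := hdiff n m h
        have h1 := hSanti hn
        have h2 := hSanti hm
        linarith
      · rw [norm_sub_rev]
        have := hdiff m n h
        have h1 := hSanti hn
        have h2 := hSanti hm
        linarith
    · simpa using hStend.const_mul 2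
  obtain ⟨xlim, hxlim⟩ := cauchySeq_tendsto_of_complete hcauchy
  have hxlimC : xlim ∈ C := hCcl.mem_of_tendsto hxlim (Eventually.of_forall hxinfC)
  have hnl : ∀ i, ‖xinf i - xlim‖ ≤ S i := by
    intro i
    have h1 : Tendsto (fun i' => ‖xinf i - xinf i'‖) atTop (𝓝 ‖xinf i - xlim‖) :=
      (tendsto_const_nhds.sub hxlim).norm
    have h2 : Tendsto (fun i' => S i + S i') atTop (𝓝 (S i + 0)) :=
      tendsto_const_nhds.add hStend
    rw [add_zero] at h2
    refine le_of_tendsto_of_tendsto h1 h2 ?_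
    filter_upwards [eventually_ge_atTop i] with i' h using hdiff i i' h
  -- the quantitative bound
  have hbound : ∀ y : H, ∀ i k : ℕ, i ≤ k →
      |⟪y, x (k + 1) - xlim⟫| ≤
        |⟪y, prodSeq T i (x i) (k + 1 - i) - xinf i⟫| + 2 * ‖y‖ * S i := by
    intro y i k hik
    set p := prodSeq T i (x i) (k + 1 - i) with hp
    have hdecomp : ⟪y, x (k + 1) - xlim⟫ =
        ⟪y, x (k + 1) - p⟫ + ⟪y, p - xinf i⟫ + ⟪y, xinf i - xlim⟫ := by
      simp only [inner_sub_right]; ring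
    have hA : |⟪y, x (k + 1) - p⟫| ≤ ‖y‖ * S i := by
      refine (abs_real_inner_le_norm _ _).trans ?_
      exact mul_le_mul_of_nonneg_left (hSb i (k + 1) (hik.trans (Nat.le_succ k)))
        (norm_nonneg y)
    have hC : |⟪y, xinf i - xlim⟫| ≤ ‖y‖ * S i := by
      refine (abs_real_inner_le_norm _ _).trans ?_
      exact mul_le_mul_of_nonneg_left (hnl i) (norm_nonneg y)
    calc |⟪y, x (k + 1) - xlim⟫|
        ≤ |⟪y, x (k + 1) - p⟫ + ⟪y, p - xinf i⟫| + |⟪y, xinf i - xlim⟫| := by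
          rw [hdecomp]; exact abs_add_le _ _
      _ ≤ |⟪y, x (k + 1) - p⟫| + |⟪y, p - xinf i⟫| + |⟪y, xinf i - xlim⟫| := by
          have := abs_add_le ⟪y, x (k + 1) - p⟫ ⟪y, p - xinf i⟫
          linarith
      _ ≤ |⟪y, p - xinf i⟫| + 2 * ‖y‖ * S i := by linarith
  -- weak convergence of x to xlim
  have hweakx : ∀ y : H, Tendsto (fun k => ⟪y, x k⟫) atTop (𝓝 ⟪y, xlim⟫) := by
    intro y
    rw [Metric.tendsto_atTop]
    intro ε hε
    have h2 : Tendsto (fun i => 2 * ‖y‖ * S i) atTop (𝓝 0) := by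
      simpa using hStend.const_mul (2 * ‖y‖)
    obtain ⟨i, hi⟩ := (h2.eventually (gt_mem_nhds (half_pos hε))).exists
    have h3 : Tendsto (fun k => ⟪y, prodSeq T i (x i) (k + 1 - i) - xinf i⟫) atTop (𝓝 0) := by
      have h4 : Tendsto (fun k => ⟪y, prodSeq T i (x i) (k + 1 - i)⟫) atTop
          (𝓝 ⟪y, xinf i⟫) := (hweak i y).comp (tendsto_add_atTop_nat 1)
      simpa [inner_sub_right] using h4.sub (tendsto_const_nhds : Tendsto _ atTop (𝓝 ⟪y, xinf i⟫))
    obtain ⟨N, hN⟩ := (Metric.tendsto_atTop.1 h3) (ε / 2) (half_pos hε)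
    refine ⟨max i N + 1, fun k hk => ?_⟩
    obtain ⟨m, rfl⟩ : ∃ m, k = m + 1 := ⟨k - 1, by omega⟩
    have him : i ≤ m := by omega
    have hNm : N ≤ m := by omega
    have hB := hN m hNm
    rw [Real.dist_eq, sub_zero] at hB
    rw [Real.dist_eq]
    have habs : |⟪y, x (m + 1)⟫ - ⟪y, xlim⟫| = |⟪y, x (m + 1) - xlim⟫| := by
      rw [inner_sub_right]
    rw [habs]
    have := hbound y i m him
    linarith
  exact ⟨xlim, hxlimC, hxlim, hweakx, hbound⟩
end

section
/- For every k = 0,1,2,…, let T_k : H → H be nonexpansive on a real Hilbert space H and let C ⊆ ⋂_k Fix T_k be nonempty, closed and convex. Let {e_k} ⊆ [0,∞) be summable and let {x^k} ⊆ H satisfy ‖x^{k+1} − T_k x^k‖ ≤ e_k for all k. Assume that for every i = 0,1,2,… there is x_i^∞ ∈ C such that T_k ⋯ T_i x^i converges in norm (as k → ∞) to x_i^∞. Then there is x^∞ ∈ C such that x^k → x^∞ in norm, and for all integers k ≥ i ≥ 0, ‖x^{k+1} − x^∞‖ ≤ ‖T_k ⋯ T_i x^i − x_i^∞‖ + 2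 Σ_{j=i}^{∞} e_j. -/
open Metric Filter Topology

/-- Perturbation resilience, strong convergence: if the unperturbed products
`T_k ⋯ T_i x^i` converge in norm to points `x_i^∞ ∈ C`, then there is `x^∞ ∈ C` with
`x^k → x^∞` in norm, and for all `k ≥ i`,
`‖x^{k+1} − x^∞‖ ≤ ‖T_k ⋯ T_i x^i − x_i^∞‖ + 2 Σ_{j=i}^∞ e_j`. -/
theorem stmt12 {H : Type*} [NormedAddCommGroup H] [InnerProductSpace ℝ H] [CompleteSpace H]
    (T : ℕ → H → H) (hT : ∀ k, ∀ y z : H, ‖T k y - T k z‖ ≤ ‖y - z‖)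
    (C : Set H) (hCne : C.Nonempty) (hCcl : IsClosed C) (hCcv : Convex ℝ C)
    (hfix : ∀ k, ∀ z ∈ C, T k z = z)
    (e : ℕ → ℝ) (he : ∀ k, 0 ≤ e k) (hesum : Summable e)
    (x : ℕ → H) (hx : ∀ k, ‖x (k + 1) - T k (x k)‖ ≤ e k)
    (xinf : ℕ → H) (hxinfC : ∀ i, xinf i ∈ C)
    (hstrong : ∀ i, Tendsto (fun k => prodSeq T i (x i) (k - i)) atTop (𝓝 (xinf i))) :
    ∃ xlim ∈ C, Tendsto x atTop (𝓝 xlim) ∧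
      ∀ i k : ℕ, i ≤ k →
        ‖x (k + 1) - xlim‖ ≤
          ‖prodSeq T i (x i) (k + 1 - i) - xinf i‖ + 2 * ∑' j, e (i + j) := by
  set E : ℕ → ℝ := fun i => ∑' j, e (i + j) with hEdef
  have hEsummable : ∀ i, Summable (fun j => e (i + j)) := by
    intro i
    have := (summable_nat_add_iff i).2 hesum
    simpa [add_comm] using this
  have hEnonneg : ∀ i, 0 ≤ E i := fun i => tsum_nonneg (fun j => he _)
  -- key cumulative error bound
  have key : ∀ i d, ‖x (i + d + 1) - prodSeq T i (x i) (d + 1)‖ ≤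
      ∑ j ∈ Finset.range (d + 1), e (i + j) := by
    intro i d
    induction d with
    | zero => simpa [prodSeq] using hx i
    | succ d ih =>
      have h1 := hx (i + d + 1)
      have h2 := hT (i + d + 1) (x (i + d + 1)) (prodSeq T i (x i) (d + 1))
      have hdef : prodSeq T i (x i) (d + 2) = T (i + d + 1) (prodSeq T i (x i) (d + 1)) := by
        show T (i + (d + 1)) _ = _
        rw [add_assoc]
      have htri : ‖x (i + d + 1 + 1) - prodSeq T i (x i) (d + 2)‖ ≤
          ‖x (i + d + 1 + 1) - T (i + d + 1) (x (i + d + 1))‖ +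
          ‖T (i + d + 1) (x (i + d + 1)) - T (i + d + 1) (prodSeq T i (x i) (d + 1))‖ := by
        rw [hdef]
        exact norm_sub_le_norm_sub_add_norm_sub _ _ _
      have : ‖x (i + (d + 1) + 1) - prodSeq T i (x i) (d + 1 + 1)‖ ≤
          e (i + d + 1) + ∑ j ∈ Finset.range (d + 1), e (i + j) := by
        calc ‖x (i + (d + 1) + 1) - prodSeq T i (x i) (d + 1 + 1)‖ =
            ‖x (i + d + 1 + 1) - prodSeq T i (x i) (d + 2)‖ := by ring_nf
          _ ≤ _ := htri
          _ ≤ e (i + d + 1) + ‖x (i + d + 1) - prodSeq T i (x i) (d + 1)‖ :=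
              add_le_add h1 h2
          _ ≤ _ := by linarith [ih]
      calc ‖x (i + (d + 1) + 1) - prodSeq T i (x i) (d + 1 + 1)‖ ≤
          e (i + d + 1) + ∑ j ∈ Finset.range (d + 1), e (i + j) := this
        _ = ∑ j ∈ Finset.range (d + 1 + 1), e (i + j) := by
            conv_rhs => rw [Finset.sum_range_succ]
            exact add_comm _ _
  have keyk : ∀ i k, i ≤ k → ‖x (k + 1) - prodSeq T i (x i) (k + 1 - i)‖ ≤ E i := by
    intro i k hik
    obtain ⟨d, rfl⟩ := Nat.exists_eq_add_of_le hik
    have h1 := key i d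
    have h2 : ∑ j ∈ Finset.range (d + 1), e (i + j) ≤ E i :=
      Summable.sum_le_tsum _ (fun j _ => he _) (hEsummable i)
    have h3 : i + d + 1 - i = d + 1 := by omega
    rw [h3]
    linarith
  -- bound on distance to xinf i
  have hxtail : ∀ i k, i ≤ k → ‖x (k + 1) - xinf i‖ ≤
      ‖prodSeq T i (x i) (k + 1 - i) - xinf i‖ + E i := by
    intro i k hik
    have := norm_sub_le_norm_sub_add_norm_sub (x (k + 1)) (prodSeq T i (x i) (k + 1 - i)) (xinf i)
    have h2 := keyk i k hik
    linarith
  -- tail sums tend to zero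
  have htail0 : Tendsto E atTop (𝓝 0) := by
    have h := tendsto_sum_nat_add e
    have : E = fun i => ∑' l, e (l + i) := by
      funext i
      exact tsum_congr fun j => by rw [add_comm]
    rw [this]
    exact h
  -- x is Cauchy
  have hcauchy : CauchySeq x := by
    rw [Metric.cauchySeq_iff]
    intro ε hε
    obtain ⟨i, hi⟩ := (Metric.tendsto_atTop.1 htail0 (ε / 4) (by linarith)).imp
      (fun i h => h i le_rfl)
    have hiE : E i < ε / 4 := by
      have := hi
      rw [Real.dist_eq, sub_zero, abs_of_nonneg (hEnonneg i)] at this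
      exact this
    obtain ⟨N, hN⟩ := Metric.tendsto_atTop.1 (hstrong i) (ε / 4) (by linarith)
    refine ⟨max N (i + 1), fun m hm n hn => ?_⟩
    have hb : ∀ k, max N (i + 1) ≤ k → dist (x k) (xinf i) < ε / 2 := by
      intro k hk
      have hk1 : i + 1 ≤ k := le_trans (le_max_right _ _) hk
      have hkN : N ≤ k := le_trans (le_max_left _ _) hk
      have hk2 : k = (k - 1) + 1 := by omega
      have hik : i ≤ k - 1 := by omega
      have h1 := hxtail i (k - 1) hik
      have h2 := hN k hkN
      rw [dist_eq_norm] at h2 ⊢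
      have h3 : k - 1 + 1 - i = k - i := by omega
      rw [h3] at h1
      rw [← hk2] at h1
      linarith
    calc dist (x m) (x n) ≤ dist (x m) (xinf i) + dist (x n) (xinf i) :=
        dist_triangle_right _ _ _
      _ < ε / 2 + ε / 2 := add_lt_add (hb m hm) (hb n hn)
      _ = ε := by ring
  obtain ⟨xlim, hxlim⟩ := cauchySeq_tendsto_of_complete hcauchy
  -- ‖xlim - xinf i‖ ≤ E i
  have hinf_lim : ∀ i, ‖xlim - xinf i‖ ≤ E i := by
    intro i
    have h1 : Tendsto (fun k => ‖x (k + 1) - xinf i‖) atTop (𝓝 ‖xlim - xinf i‖) := by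
      have := (hxlim.comp (tendsto_add_atTop_nat 1)).sub_const (xinf i)
      exact this.norm
    have h2 : Tendsto (fun k => ‖prodSeq T i (x i) (k + 1 - i) - xinf i‖ + E i) atTop
        (𝓝 (0 + E i)) := by
      have h3 : Tendsto (fun k => prodSeq T i (x i) (k + 1 - i)) atTop (𝓝 (xinf i)) :=
        (hstrong i).comp (tendsto_add_atTop_nat 1)
      have := (h3.sub_const (xinf i)).norm
      simpa using this.add_const (E i)
    have h4 : ‖xlim - xinf i‖ ≤ 0 + E i := by
      refine le_of_tendsto_of_tendsto h1 h2 ?_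
      filter_upwards [eventually_ge_atTop i] with k hk
      exact hxtail i k hk
    linarith
  -- xinf → xlim, so xlim ∈ C
  have hxinf_tendsto : Tendsto xinf atTop (𝓝 xlim) := by
    rw [tendsto_iff_norm_sub_tendsto_zero]
    refine squeeze_zero (fun i => norm_nonneg _) (fun i => ?_) htail0
    rw [norm_sub_rev]
    exact hinf_lim i
  have hCmem : xlim ∈ C := hCcl.mem_of_tendsto hxinf_tendsto (Eventually.of_forall hxinfC)
  refine ⟨xlim, hCmem, hxlim, fun i k hik => ?_⟩
  have h1 := hxtail i k hik
  have h2 := hinf_lim i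
  have h3 := norm_sub_le_norm_sub_add_norm_sub (x (k + 1)) (xinf i) xlim
  rw [norm_sub_rev xlim (xinf i)] at h2
  linarith
end

section
/- For every k = 0,1,2,…, let T_k : H → H be nonexpansive on a real Hilbert space H and let C ⊆ ⋂_k Fix T_k be nonempty, closed and convex. Let {β_k} ⊆ (0,∞) be summable, let {v^k} ⊆ H be bounded, and define x^{k+1} := T_k(x^k − β_k v^k) for a given x^0 ∈ H. Assume that for every i = 0,1,2,… there is x_i^∞ ∈ C such that T_k ⋯ T_i x^i converges in norm (as k → ∞) to x_i^∞. Then there is x^∞ ∈ C such that x^k → x^∞ in norm, and for all integers k ≥ i ≥ 0, ‖x^{k+1} − x^∞‖ ≤ ‖T_k ⋯ T_i x^i − x_i^∞‖ + 2 Σ_{j=i}^{∞} β_j ‖v^j‖. -/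
/-!
Nonexpansiveness keeps the perturbed orbit `x^{i+n}` within `Σ_{j≥i} β_j ‖v^j‖` of the
unperturbed orbit `T_{i+n-1} ⋯ T_i x^i`, so every `x_i^∞` is a limit point of `x^k` up to this
tail. Two such points are therefore within the sum of their tails, the sequence `x_i^∞` is
Cauchy, and its limit `x^∞` lies in the closed set `C` and attracts `x^k`; the estimate is the
triangle inequality through `x_i^∞`.
-/

open Metric Filter Topology

section PerturbedOrbit

variable {X : Type*} [PseudoMetricSpace X] {T : ℕ → X → X} {x : ℕ → X} {e : ℕ → ℝ}

theorem dist_prodSeq_le_sum (hT : ∀ k y z, dist (T k y) (T k z) ≤ dist y z)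
    (hx : ∀ k, dist (x (k + 1)) (T k (x k)) ≤ e k) (i n : ℕ) :
    dist (x (i + n)) (prodSeq T i (x i) n) ≤ ∑ j ∈ Finset.range n, e (i + j) := by
  induction n with
  | zero => simp [prodSeq]
  | succ n ih =>
    rw [Finset.sum_range_succ, ← add_assoc, prodSeq]
    calc dist (x (i + n + 1)) (T (i + n) (prodSeq T i (x i) n))
        ≤ dist (x (i + n + 1)) (T (i + n) (x (i + n)))
          + dist (T (i + n) (x (i + n))) (T (i + n) (prodSeq T i (x i) n)) := dist_triangle _ _ _
      _ ≤ e (i + n) + dist (x (i + n)) (prodSeq T i (x i) n) := add_le_add (hx _) (hT _ _ _)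
      _ ≤ _ := by linarith

theorem dist_prodSeq_le_tsum (hT : ∀ k y z, dist (T k y) (T k z) ≤ dist y z)
    (hx : ∀ k, dist (x (k + 1)) (T k (x k)) ≤ e k) (he0 : ∀ k, 0 ≤ e k) (he : Summable e)
    {i k : ℕ} (hik : i ≤ k) :
    dist (x k) (prodSeq T i (x i) (k - i)) ≤ ∑' j, e (i + j) := by
  obtain ⟨n, rfl⟩ := Nat.exists_eq_add_of_le hik
  rw [Nat.add_sub_cancel_left]
  exact (dist_prodSeq_le_sum hT hx i n).trans <|
    (he.comp_injective (add_right_injective i)).sum_le_tsum _ fun j _ => he0 _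

end PerturbedOrbit

theorem tendsto_tsum_nat_add_left {f : ℕ → ℝ} :
    Tendsto (fun i => ∑' j, f (i + j)) atTop (𝓝 0) := by
  simpa only [add_comm] using tendsto_sum_nat_add f

theorem exists_tendsto_of_dist_le_add {X : Type*} [PseudoMetricSpace X] [CompleteSpace X]
    {x y : ℕ → X} {d : ℕ → ℕ → ℝ} {t : ℕ → ℝ} (ht : Tendsto t atTop (𝓝 0))
    (hd : ∀ i, Tendsto (d i) atTop (𝓝 0))
    (hxy : ∀ i, ∀ᶠ k in atTop, dist (x k) (y i) ≤ d i k + t i) :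
    ∃ L, Tendsto y atTop (𝓝 L) ∧ Tendsto x atTop (𝓝 L) ∧ ∀ i, dist (y i) L ≤ t i := by
  have hyy : ∀ i j, dist (y i) (y j) ≤ t i + t j := fun i j => by
    refine ge_of_tendsto (by simpa using ((hd i).add_const (t i)).add ((hd j).add_const (t j)))
      ?_
    filter_upwards [hxy i, hxy j] with k hi hj
    exact (dist_triangle_left _ _ (x k)).trans (add_le_add hi hj)
  have hcauchy : CauchySeq y := Metric.cauchySeq_iff'.2 fun ε hε => by
    obtain ⟨N, hN⟩ := eventually_atTop.1 (ht.eventually (gt_mem_nhds (half_pos hε)))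
    exact ⟨N, fun n hn => (hyy n N).trans_lt (by linarith [hN n hn, hN N le_rfl])⟩
  obtain ⟨L, hL⟩ := cauchySeq_tendsto_of_complete hcauchy
  have hyL : ∀ i, dist (y i) L ≤ t i := fun i =>
    le_of_tendsto_of_tendsto' (tendsto_const_nhds.dist hL)
      (by simpa using tendsto_const_nhds.add ht) (hyy i)
  refine ⟨L, hL, Metric.tendsto_nhds.2 fun ε hε => ?_, hyL⟩
  obtain ⟨i, hi⟩ := (ht.eventually (gt_mem_nhds (show 0 < ε / 4 by positivity))).exists
  filter_upwards [hxy i, (hd i).eventually (gt_mem_nhds (half_pos hε))] with k hk hdk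
  linarith [dist_triangle (x k) (y i) L, hyL i]

theorem stmt13_general {H : Type*} [NormedAddCommGroup H] [InnerProductSpace ℝ H] [CompleteSpace H]
    (T : ℕ → H → H) (hT : ∀ k, ∀ y z : H, ‖T k y - T k z‖ ≤ ‖y - z‖)
    (C : Set H) (hCcl : IsClosed C)
    (β : ℕ → ℝ) (hβ : ∀ k, 0 < β k) (hβsum : Summable β)
    (v : ℕ → H) (hv : ∃ B : ℝ, ∀ k, ‖v k‖ ≤ B)
    (x : ℕ → H) (hx : ∀ k, x (k + 1) = T k (x k - β k • v k))
    (xinf : ℕ → H) (hxinfC : ∀ i, xinf i ∈ C)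
    (hstrong : ∀ i, Tendsto (fun k => prodSeq T i (x i) (k - i)) atTop (𝓝 (xinf i))) :
    ∃ xlim ∈ C, Tendsto x atTop (𝓝 xlim) ∧
      ∀ i k : ℕ, i ≤ k →
        ‖x (k + 1) - xlim‖ ≤
          ‖prodSeq T i (x i) (k + 1 - i) - xinf i‖ + 2 * ∑' j, β (i + j) * ‖v (i + j)‖ := by
  obtain ⟨B, hB⟩ := hv
  set e : ℕ → ℝ := fun j => β j * ‖v j‖
  have he0 (j : ℕ) : 0 ≤ e j := mul_nonneg (hβ j).le (norm_nonneg _)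
  have he : Summable e := (hβsum.mul_right B).of_nonneg_of_le he0 fun j =>
    mul_le_mul_of_nonneg_left (hB j) (hβ j).le
  have hTdist (k : ℕ) (y z : H) : dist (T k y) (T k z) ≤ dist y z := by
    simpa only [dist_eq_norm] using hT k y z
  have hstep (k : ℕ) : dist (x (k + 1)) (T k (x k)) ≤ e k := by
    rw [hx, dist_eq_norm]
    refine (hT k _ _).trans_eq ?_
    rw [sub_sub_cancel_left, norm_neg, norm_smul, Real.norm_of_nonneg (hβ k).le]
  have hxy {i k : ℕ} (hik : i ≤ k) : dist (x k) (xinf i) ≤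
      dist (prodSeq T i (x i) (k - i)) (xinf i) + ∑' j, e (i + j) := by
    linarith [dist_triangle (x k) (prodSeq T i (x i) (k - i)) (xinf i),
      dist_prodSeq_le_tsum hTdist hstep he0 he hik]
  obtain ⟨xlim, hyL, hxL, hdist⟩ := exists_tendsto_of_dist_le_add tendsto_tsum_nat_add_left
    (fun i => tendsto_iff_dist_tendsto_zero.1 (hstrong i))
    (fun i => (eventually_ge_atTop i).mono fun k => hxy)
  refine ⟨xlim, hCcl.mem_of_tendsto hyL (.of_forall hxinfC), hxL, fun i k hik => ?_⟩
  rw [← dist_eq_norm, ← dist_eq_norm]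
  linarith [dist_triangle (x (k + 1)) (xinf i) xlim, hxy (hik.trans k.le_succ), hdist i]

/-- Superiorization, strong convergence: for the superiorized iteration
`x^{k+1} = T_k (x^k − β_k v^k)` with `{β_k}` summable and `{v^k}` bounded, if the
unperturbed products `T_k ⋯ T_i x^i` converge in norm to points `x_i^∞ ∈ C`, then there is
`x^∞ ∈ C` with `x^k → x^∞` in norm and, for all `k ≥ i`,
`‖x^{k+1} − x^∞‖ ≤ ‖T_k ⋯ T_i x^i − x_i^∞‖ + 2 Σ_{j=i}^∞ β_j ‖v^j‖`. -/
theorem stmt13 {H : Type*} [NormedAddCommGroup H] [InnerProductSpace ℝ H] [CompleteSpace H]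
    (T : ℕ → H → H) (hT : ∀ k, ∀ y z : H, ‖T k y - T k z‖ ≤ ‖y - z‖)
    (C : Set H) (hCne : C.Nonempty) (hCcl : IsClosed C) (hCcv : Convex ℝ C)
    (hfix : ∀ k, ∀ z ∈ C, T k z = z)
    (β : ℕ → ℝ) (hβ : ∀ k, 0 < β k) (hβsum : Summable β)
    (v : ℕ → H) (hv : ∃ B : ℝ, ∀ k, ‖v k‖ ≤ B)
    (x : ℕ → H) (hx : ∀ k, x (k + 1) = T k (x k - β k • v k))
    (xinf : ℕ → H) (hxinfC : ∀ i, xinf i ∈ C)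
    (hstrong : ∀ i, Tendsto (fun k => prodSeq T i (x i) (k - i)) atTop (𝓝 (xinf i))) :
    ∃ xlim ∈ C, Tendsto x atTop (𝓝 xlim) ∧
      ∀ i k : ℕ, i ≤ k →
        ‖x (k + 1) - xlim‖ ≤
          ‖prodSeq T i (x i) (k + 1 - i) - xinf i‖ + 2 * ∑' j, β (i + j) * ‖v (i + j)‖ :=
  stmt13_general T hT C hCcl β hβ hβsum v hv x hx xinf hxinfC hstrong
end

section
/- For every k = 0,1,2,…, let T_k : H → H be nonexpansive on a real Hilbert space H and let C ⊆ ⋂_k Fix T_k be nonempty, closed and convex. Let {β_k} ⊆ (0,∞) be summable, let {v^k} ⊆ H be bounded, and define x^{k+1} := T_k(x^k − β_k v^k) for a given x^0 ∈ H. Assume that for every i = 0,1,2,… there is x_i^∞ ∈ C such that T_k ⋯ T_i x^i converges weakly (as k → ∞) to x_i^∞. Then there is x^∞ ∈ C such that x_i^∞ → x^∞ in norm and x^k converges weakly to x^∞; moreover, for all y ∈ H and all integers k ≥ i ≥ 0, |⟨y, x^{k+1} − x^∞⟩| ≤ |⟨y, T_k ⋯ T_i x^i − x_i^∞⟩| +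 2‖y‖ Σ_{j=i}^{∞} β_j ‖v^j‖. -/
open Metric Filter Topology
open scoped RealInnerProductSpace

lemma prodSeq_succ' {H : Type*} (T : ℕ → H → H) (i : ℕ) (w : H) :
    ∀ n, prodSeq T i w (n + 1) = prodSeq T (i + 1) (T i w) n
  | 0 => rfl
  | n + 1 => by
    rw [prodSeq, prodSeq_succ' T i w n, prodSeq, Nat.add_right_comm, Nat.add_assoc]

section Normed

variable {H : Type*} [NormedAddCommGroup H] {T : ℕ → H → H}

lemma norm_prodSeq_sub_prodSeq_le (hT : ∀ k, ∀ y z : H, ‖T k y - T k z‖ ≤ ‖y - z‖)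
    (i : ℕ) (w z : H) : ∀ n, ‖prodSeq T i w n - prodSeq T i z n‖ ≤ ‖w - z‖
  | 0 => le_rfl
  | n + 1 => (hT _ _ _).trans (norm_prodSeq_sub_prodSeq_le hT i w z n)

lemma norm_sub_prodSeq_le_sum (hT : ∀ k, ∀ y z : H, ‖T k y - T k z‖ ≤ ‖y - z‖)
    {x e : ℕ → H} (hx : ∀ k, x (k + 1) = T k (x k - e k)) (i : ℕ) :
    ∀ n, ‖x (i + n) - prodSeq T i (x i) n‖ ≤ ∑ j ∈ Finset.range n, ‖e (i + j)‖
  | 0 => by simp [prodSeq]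
  | n + 1 => calc
      ‖x (i + (n + 1)) - prodSeq T i (x i) (n + 1)‖
          = ‖T (i + n) (x (i + n) - e (i + n)) - T (i + n) (prodSeq T i (x i) n)‖ := by
        rw [← Nat.add_assoc, hx, prodSeq]
      _ ≤ ‖(x (i + n) - prodSeq T i (x i) n) - e (i + n)‖ := by
        rw [sub_right_comm]; exact hT _ _ _
      _ ≤ ‖x (i + n) - prodSeq T i (x i) n‖ + ‖e (i + n)‖ := norm_sub_le _ _
      _ ≤ ∑ j ∈ Finset.range (n + 1), ‖e (i + j)‖ := by
        rw [Finset.sum_range_succ]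
        exact add_le_add_left (norm_sub_prodSeq_le_sum hT hx i n) _

lemma norm_sub_prodSeq_le_tsum (hT : ∀ k, ∀ y z : H, ‖T k y - T k z‖ ≤ ‖y - z‖)
    {x e : ℕ → H} (hx : ∀ k, x (k + 1) = T k (x k - e k)) {f : ℕ → ℝ}
    (he : ∀ k, ‖e k‖ ≤ f k) (hf : Summable f) (i n : ℕ) :
    ‖x (i + n) - prodSeq T i (x i) n‖ ≤ ∑' j, f (i + j) := calc
  ‖x (i + n) - prodSeq T i (x i) n‖ ≤ ∑ j ∈ Finset.range n, ‖e (i + j)‖ :=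
    norm_sub_prodSeq_le_sum hT hx i n
  _ ≤ ∑ j ∈ Finset.range n, f (i + j) := Finset.sum_le_sum fun j _ => he (i + j)
  _ ≤ ∑' j, f (i + j) :=
    (hf.comp_injective (add_right_injective i)).sum_le_tsum _
      fun j _ => (norm_nonneg _).trans (he (i + j))

end Normed

section Inner

variable {H : Type*} [NormedAddCommGroup H] [InnerProductSpace ℝ H]

def WeakTendsto (u : ℕ → H) (p : H) : Prop :=
  ∀ y : H, Tendsto (fun k => ⟪y, u k⟫) atTop (𝓝 ⟪y, p⟫)

/-- Weak lower semicontinuity of the norm, tested against `p - q`. -/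
lemma WeakTendsto.norm_sub_le {a b : ℕ → H} {p q : H} {δ : ℝ} (ha : WeakTendsto a p)
    (hb : WeakTendsto b q) (h : ∀ᶠ k in atTop, ‖a k - b k‖ ≤ δ) : ‖p - q‖ ≤ δ := by
  have hδ : 0 ≤ δ := by
    obtain ⟨k, hk⟩ := h.exists
    exact (norm_nonneg _).trans hk
  have hlim : Tendsto (fun k => ⟪p - q, a k - b k⟫) atTop (𝓝 ⟪p - q, p - q⟫) := by
    simpa only [inner_sub_right] using (ha (p - q)).sub (hb (p - q))
  have hle : ‖p - q‖ ^ 2 ≤ ‖p - q‖ * δ := by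
    rw [← real_inner_self_eq_norm_sq]
    refine le_of_tendsto hlim (h.mono fun k hk => ?_)
    exact (real_inner_le_norm _ _).trans (mul_le_mul_of_nonneg_left hk (norm_nonneg _))
  nlinarith [norm_nonneg (p - q)]

lemma abs_inner_sub_le_of_norm_sub_le (y : H) {a b c d : H} {δ : ℝ} (hab : ‖a - b‖ ≤ δ)
    (hcd : ‖c - d‖ ≤ δ) : |⟪y, a - d⟫| ≤ |⟪y, b - c⟫| + 2 * ‖y‖ * δ := by
  have hsplit : ⟪y, a - d⟫ = ⟪y, a - b⟫ + ⟪y, b - c⟫ + ⟪y, c - d⟫ := by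
    rw [← inner_add_right, ← inner_add_right]
    abel_nf
  have hyab := (abs_real_inner_le_norm y (a - b)).trans
    (mul_le_mul_of_nonneg_left hab (norm_nonneg y))
  have hycd := (abs_real_inner_le_norm y (c - d)).trans
    (mul_le_mul_of_nonneg_left hcd (norm_nonneg y))
  rw [hsplit]
  linarith [abs_add_three ⟪y, a - b⟫ ⟪y, b - c⟫ ⟪y, c - d⟫]

lemma WeakTendsto.of_abs_inner_sub_le {u : ℕ → H} {q : H} {P : ℕ → ℕ → H} {p : ℕ → H}
    (hP : ∀ i, WeakTendsto (P i) (p i))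
    (h : ∀ y : H, ∃ c : ℕ → ℝ, Tendsto c atTop (𝓝 0) ∧
      ∀ i, ∀ᶠ k in atTop, |⟪y, u k - q⟫| ≤ |⟪y, P i k - p i⟫| + c i) :
    WeakTendsto u q := by
  intro y
  obtain ⟨c, hc, hu⟩ := h y
  rw [← tendsto_sub_nhds_zero_iff, Metric.tendsto_nhds]
  intro δ hδ
  obtain ⟨i, hi⟩ := (hc.eventually (gt_mem_nhds (half_pos hδ))).exists
  have hPi : Tendsto (fun k => ⟪y, P i k - p i⟫) atTop (𝓝 0) := by
    simpa only [inner_sub_right, sub_self] using (hP i y).sub_const ⟪y, p i⟫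
  filter_upwards [hu i, Metric.tendsto_nhds.1 hPi (δ / 2) (half_pos hδ)] with k hk hPk
  rw [Real.dist_eq, sub_zero] at hPk ⊢
  rw [← inner_sub_right]
  linarith

lemma norm_weakLimit_succ_sub_le {T : ℕ → H → H}
    (hT : ∀ k, ∀ y z : H, ‖T k y - T k z‖ ≤ ‖y - z‖)
    {x e : ℕ → H} (hx : ∀ k, x (k + 1) = T k (x k - e k)) {xinf : ℕ → H}
    (hweak : ∀ i, WeakTendsto (fun k => prodSeq T i (x i) (k - i)) (xinf i)) (i : ℕ) :
    ‖xinf (i + 1) - xinf i‖ ≤ ‖e i‖ := by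
  refine (hweak (i + 1)).norm_sub_le (hweak i) ?_
  filter_upwards [eventually_gt_atTop i] with k hk
  rw [show k - i = k - (i + 1) + 1 by omega, prodSeq_succ', hx]
  refine (norm_prodSeq_sub_prodSeq_le hT _ _ _ _).trans ((hT _ _ _).trans ?_)
  rw [sub_sub_cancel_left, norm_neg]

end Inner

theorem stmt14_general {H : Type*} [NormedAddCommGroup H] [InnerProductSpace ℝ H] [CompleteSpace H]
    (T : ℕ → H → H) (hT : ∀ k, ∀ y z : H, ‖T k y - T k z‖ ≤ ‖y - z‖)
    (C : Set H) (hCcl : IsClosed C)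
    (β : ℕ → ℝ) (hβ : ∀ k, 0 < β k) (hβsum : Summable β)
    (v : ℕ → H) (hv : ∃ B : ℝ, ∀ k, ‖v k‖ ≤ B)
    (x : ℕ → H) (hx : ∀ k, x (k + 1) = T k (x k - β k • v k))
    (xinf : ℕ → H) (hxinfC : ∀ i, xinf i ∈ C)
    (hweak : ∀ i, ∀ y : H,
      Tendsto (fun k => ⟪y, prodSeq T i (x i) (k - i)⟫) atTop (𝓝 ⟪y, xinf i⟫)) :
    ∃ xlim ∈ C, Tendsto xinf atTop (𝓝 xlim) ∧
      (∀ y : H, Tendsto (fun k => ⟪y, x k⟫) atTop (𝓝 ⟪y, xlim⟫)) ∧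
      ∀ y : H, ∀ i k : ℕ, i ≤ k →
        |⟪y, x (k + 1) - xlim⟫| ≤
          |⟪y, prodSeq T i (x i) (k + 1 - i) - xinf i⟫| +
            2 * ‖y‖ * ∑' j, β (i + j) * ‖v (i + j)‖ := by
  obtain ⟨B, hB⟩ := hv
  set f : ℕ → ℝ := fun j => β j * ‖v j‖
  have he : ∀ k, ‖β k • v k‖ ≤ f k := fun k => (norm_smul_of_nonneg (hβ k).le _).le
  have hf : Summable f := (hβsum.mul_right B).of_nonneg_of_le
    (fun j => mul_nonneg (hβ j).le (norm_nonneg _))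
    (fun j => mul_le_mul_of_nonneg_left (hB j) (hβ j).le)
  have hstep : ∀ i, dist (xinf i) (xinf (i + 1)) ≤ f i := fun i => by
    rw [dist_comm, dist_eq_norm]
    exact (norm_weakLimit_succ_sub_le hT hx hweak i).trans (he i)
  obtain ⟨xlim, hlim⟩ :=
    cauchySeq_tendsto_of_complete (cauchySeq_of_dist_le_of_summable f hstep hf)
  have hmain : ∀ y : H, ∀ i k : ℕ, i ≤ k →
      |⟪y, x (k + 1) - xlim⟫| ≤ |⟪y, prodSeq T i (x i) (k + 1 - i) - xinf i⟫| +
        2 * ‖y‖ * ∑' j, f (i + j) := fun y i k hik => by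
    have hnear := norm_sub_prodSeq_le_tsum hT hx he hf i (k + 1 - i)
    rw [Nat.add_sub_cancel' (by omega)] at hnear
    exact abs_inner_sub_le_of_norm_sub_le y hnear
      (dist_eq_norm (xinf i) xlim ▸ dist_le_tsum_of_dist_le_of_tendsto f hstep hf hlim i)
  refine ⟨xlim, hCcl.mem_of_tendsto hlim (.of_forall hxinfC), hlim,
    WeakTendsto.of_abs_inner_sub_le hweak fun y => ⟨fun i => 2 * ‖y‖ * ∑' j, f (i + j), ?_,
      fun i => ?_⟩, hmain⟩
  · simpa only [add_comm, mul_zero] using (tendsto_sum_nat_add f).const_mul (2 * ‖y‖)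
  · filter_upwards [eventually_gt_atTop i] with k hk
    obtain ⟨m, rfl⟩ := Nat.exists_eq_add_of_lt hk
    exact hmain y i (i + m) (Nat.le_add_right i m)

/-- Superiorization, weak convergence: for the superiorized iteration
`x^{k+1} = T_k (x^k − β_k v^k)` with `{β_k}` summable and `{v^k}` bounded, if the
unperturbed products `T_k ⋯ T_i x^i` converge weakly to points `x_i^∞ ∈ C`, then there is
`x^∞ ∈ C` with `x_i^∞ → x^∞` in norm, `x^k ⇀ x^∞`, and for all `y ∈ H` and all `k ≥ i`,
`|⟨y, x^{k+1} − x^∞⟩| ≤ |⟨y, T_k ⋯ T_i x^i − x_i^∞⟩| + 2‖y‖ Σ_{j=i}^∞ β_j ‖v^j‖`. -/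
theorem stmt14 {H : Type*} [NormedAddCommGroup H] [InnerProductSpace ℝ H] [CompleteSpace H]
    (T : ℕ → H → H) (hT : ∀ k, ∀ y z : H, ‖T k y - T k z‖ ≤ ‖y - z‖)
    (C : Set H) (hCne : C.Nonempty) (hCcl : IsClosed C) (hCcv : Convex ℝ C)
    (hfix : ∀ k, ∀ z ∈ C, T k z = z)
    (β : ℕ → ℝ) (hβ : ∀ k, 0 < β k) (hβsum : Summable β)
    (v : ℕ → H) (hv : ∃ B : ℝ, ∀ k, ‖v k‖ ≤ B)
    (x : ℕ → H) (hx : ∀ k, x (k + 1) = T k (x k - β k • v k))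
    (xinf : ℕ → H) (hxinfC : ∀ i, xinf i ∈ C)
    (hweak : ∀ i, ∀ y : H,
      Tendsto (fun k => ⟪y, prodSeq T i (x i) (k - i)⟫) atTop (𝓝 ⟪y, xinf i⟫)) :
    ∃ xlim ∈ C, Tendsto xinf atTop (𝓝 xlim) ∧
      (∀ y : H, Tendsto (fun k => ⟪y, x k⟫) atTop (𝓝 ⟪y, xlim⟫)) ∧
      ∀ y : H, ∀ i k : ℕ, i ≤ k →
        |⟪y, x (k + 1) - xlim⟫| ≤
          |⟪y, prodSeq T i (x i) (k + 1 - i) - xinf i⟫| +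
            2 * ‖y‖ * ∑' j, β (i + j) * ‖v (i + j)‖ :=
  stmt14_general T hT C hCcl β hβ hβsum v hv x hx xinf hxinfC hweak
end

section
/- For every k = 0,1,2,…, let T_k : H → H be nonexpansive on a real Hilbert space H and let C ⊆ ⋂_k Fix T_k be nonempty, closed and convex. Let {e_k} ⊆ [0,∞) be summable and let {x^k} ⊆ H satisfy ‖x^{k+1} − T_k x^k‖ ≤ e_k for all k. Assume that for given starting points the unperturbed products converge linearly: for every i = 0,1,2,… there are c_i ∈ (0,∞), q_i ∈ (0,1) and x_i^∞ ∈ C such that ‖T_k ⋯ T_i x^i − x_i^∞‖ ≤ c_i · q_i^{k−i} for every k ≥ i. Then {x^k} converges in norm to some x^∞ ∈ C and for all integers k ≥ i ≥ 0, d(x^{k+1}, C) ≤ ‖x^{k+1} − x^∞‖ ≤ c_i · q_i^{k−i} + 2 Σ_{j=i}^{∞} e_j. -/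
open Metric Filter Topology

/-- Preservation of the linear rate under summable perturbations: if the unperturbed
products converge linearly, `‖T_k ⋯ T_i x^i − x_i^∞‖ ≤ c_i q_i^{k−i}` for all `k ≥ i`, then
the perturbed trajectory converges in norm to some `x^∞ ∈ C` and for all `k ≥ i`,
`d(x^{k+1}, C) ≤ ‖x^{k+1} − x^∞‖ ≤ c_i q_i^{k−i} + 2 Σ_{j=i}^∞ e_j`. -/
theorem stmt15 {H : Type*} [NormedAddCommGroup H] [InnerProductSpace ℝ H] [CompleteSpace H]
    (T : ℕ → H → H) (hT : ∀ k, ∀ y z : H, ‖T k y - T k z‖ ≤ ‖y - z‖)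
    (C : Set H) (hCne : C.Nonempty) (hCcl : IsClosed C) (hCcv : Convex ℝ C)
    (hfix : ∀ k, ∀ z ∈ C, T k z = z)
    (e : ℕ → ℝ) (he : ∀ k, 0 ≤ e k) (hesum : Summable e)
    (x : ℕ → H) (hx : ∀ k, ‖x (k + 1) - T k (x k)‖ ≤ e k)
    (c q : ℕ → ℝ) (hc : ∀ i, 0 < c i) (hq : ∀ i, q i ∈ Set.Ioo (0 : ℝ) 1)
    (xinf : ℕ → H) (hxinfC : ∀ i, xinf i ∈ C)
    (hlin : ∀ i k : ℕ, i ≤ k →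
      ‖prodSeq T i (x i) (k + 1 - i) - xinf i‖ ≤ c i * q i ^ (k - i)) :
    ∃ xlim ∈ C, Tendsto x atTop (𝓝 xlim) ∧
      ∀ i k : ℕ, i ≤ k →
        infDist (x (k + 1)) C ≤ ‖x (k + 1) - xlim‖ ∧
        ‖x (k + 1) - xlim‖ ≤ c i * q i ^ (k - i) + 2 * ∑' j, e (i + j) := by
  set E : ℕ → ℝ := fun i => ∑' j, e (i + j) with hEdef
  have hsumE : ∀ i, Summable (fun j => e (i + j)) := fun i => by
    simpa [add_comm] using (summable_nat_add_iff i).mpr hesum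
  have hEnn : ∀ i, 0 ≤ E i := fun i => tsum_nonneg fun j => he _
  -- error accumulation
  have hA : ∀ i n, ‖x (i + n) - prodSeq T i (x i) n‖ ≤ ∑ j ∈ Finset.range n, e (i + j) := by
    intro i n
    induction n with
    | zero => simp [prodSeq]
    | succ n ih =>
      have h1 : ‖x (i + n + 1) - T (i + n) (x (i + n))‖ ≤ e (i + n) := hx (i + n)
      have h2 : ‖T (i + n) (x (i + n)) - T (i + n) (prodSeq T i (x i) n)‖ ≤
          ‖x (i + n) - prodSeq T i (x i) n‖ := hT _ _ _
      have heq : x (i + (n + 1)) - prodSeq T i (x i) (n + 1)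
          = (x (i + n + 1) - T (i + n) (x (i + n)))
            + (T (i + n) (x (i + n)) - T (i + n) (prodSeq T i (x i) n)) := by
        show x (i + (n + 1)) - T (i + n) (prodSeq T i (x i) n) = _
        rw [show i + (n + 1) = i + n + 1 from by ring]
        abel
      rw [heq, Finset.sum_range_succ]
      calc _ ≤ ‖x (i + n + 1) - T (i + n) (x (i + n))‖
            + ‖T (i + n) (x (i + n)) - T (i + n) (prodSeq T i (x i) n)‖ := norm_add_le _ _
        _ ≤ e (i + n) + ∑ j ∈ Finset.range n, e (i + j) := add_le_add h1 (h2.trans ih)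
        _ = _ := by ring
  have hA' : ∀ i n, ‖x (i + n) - prodSeq T i (x i) n‖ ≤ E i := fun i n =>
    (hA i n).trans (Summable.sum_le_tsum _ (fun j _ => he _) (hsumE i))
  -- main bound on the perturbed trajectory
  have hB : ∀ i k, i ≤ k → ‖x (k + 1) - xinf i‖ ≤ c i * q i ^ (k - i) + E i := by
    intro i k hik
    obtain ⟨m, rfl⟩ := Nat.exists_eq_add_of_le hik
    rw [show i + m - i = m from by omega]
    have h1 := hA' i (m + 1)
    have h2 := hlin i (i + m) (Nat.le_add_right _ _)
    have hs : i + m + 1 - i = m + 1 := by omega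
    have hs2 : i + m - i = m := by omega
    rw [hs, hs2] at h2
    calc ‖x (i + m + 1) - xinf i‖
        ≤ ‖x (i + (m + 1)) - prodSeq T i (x i) (m + 1)‖
          + ‖prodSeq T i (x i) (m + 1) - xinf i‖ := by
          rw [show i + (m + 1) = i + m + 1 from by ring]
          exact norm_sub_le_norm_sub_add_norm_sub _ _ _
      _ ≤ E i + c i * q i ^ m := add_le_add h1 h2
      _ = c i * q i ^ m + E i := by ring
  -- tails of a summable series tend to 0
  have hEtend : Tendsto E atTop (𝓝 0) := by
    have h := tendsto_sum_nat_add e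
    simpa [hEdef, add_comm] using h
  -- Cauchy
  have hcauchy : CauchySeq x := by
    rw [Metric.cauchySeq_iff]
    intro ε hε
    obtain ⟨i, hi⟩ := (hEtend.eventually (eventually_lt_nhds (show (0:ℝ) < ε/4 by linarith))).exists
    have hq0 := (hq i).1
    have hq1 := (hq i).2
    have hpow : Tendsto (fun m : ℕ => c i * q i ^ m) atTop (𝓝 0) := by
      simpa using (tendsto_pow_atTop_nhds_zero_of_lt_one hq0.le hq1).const_mul (c i)
    obtain ⟨m0, hm0⟩ := (hpow.eventually (eventually_lt_nhds
      (show (0:ℝ) < ε/4 by linarith))).exists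
    refine ⟨i + m0 + 1, fun n hn l hl => ?_⟩
    have key : ∀ k, i + m0 + 1 ≤ k → ‖x k - xinf i‖ < ε / 2 := by
      intro k hk
      obtain ⟨k', rfl⟩ : ∃ k', k = k' + 1 := ⟨k - 1, by omega⟩
      have hik : i ≤ k' := by omega
      have hb := hB i k' hik
      have hmono : c i * q i ^ (k' - i) ≤ c i * q i ^ m0 := by
        apply mul_le_mul_of_nonneg_left _ (hc i).le
        exact pow_le_pow_of_le_one hq0.le hq1.le (by omega)
      calc ‖x (k' + 1) - xinf i‖ ≤ c i * q i ^ (k' - i) + E i := hb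
        _ ≤ c i * q i ^ m0 + E i := by linarith
        _ < ε / 4 + ε / 4 := by linarith
        _ = ε / 2 := by ring
    have := key n hn
    have := key l hl
    calc dist (x n) (x l) ≤ dist (x n) (xinf i) + dist (xinf i) (x l) := dist_triangle _ _ _
      _ = ‖x n - xinf i‖ + ‖x l - xinf i‖ := by
          rw [dist_eq_norm, dist_eq_norm, norm_sub_rev (xinf i)]
      _ < ε / 2 + ε / 2 := by linarith
      _ = ε := by ring
  obtain ⟨xlim, hxl⟩ := cauchySeq_tendsto_of_complete hcauchy
  -- xinf i is within E i of the limit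
  have hclose : ∀ i, ‖xinf i - xlim‖ ≤ E i := by
    intro i
    have h1 : Tendsto (fun k : ℕ => ‖x (k + 1) - xinf i‖) atTop (𝓝 ‖xlim - xinf i‖) :=
      ((hxl.comp (tendsto_add_atTop_nat 1)).sub tendsto_const_nhds).norm
    have h2 : Tendsto (fun k : ℕ => c i * q i ^ (k - i) + E i) atTop (𝓝 (0 + E i)) := by
      apply Tendsto.add _ tendsto_const_nhds
      have hpow : Tendsto (fun m : ℕ => c i * q i ^ m) atTop (𝓝 0) := by
        simpa using (tendsto_pow_atTop_nhds_zero_of_lt_one (hq i).1.le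
          (hq i).2).const_mul (c i)
      exact hpow.comp (tendsto_sub_atTop_nat i)
    have h3 : ‖xlim - xinf i‖ ≤ 0 + E i := by
      refine le_of_tendsto_of_tendsto h1 h2 (eventually_atTop.2 ⟨i, fun k hk => hB i k hk⟩)
    rw [← norm_neg (xinf i - xlim)]
    simpa using h3
  have hlimC : xlim ∈ C := by
    have htend : Tendsto xinf atTop (𝓝 xlim) := by
      rw [tendsto_iff_norm_sub_tendsto_zero]
      exact squeeze_zero (fun i => norm_nonneg _) hclose hEtend
    exact hCcl.mem_of_tendsto htend (Eventually.of_forall hxinfC)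
  refine ⟨xlim, hlimC, hxl, fun i k hik => ?_⟩
  constructor
  · simpa [dist_eq_norm] using infDist_le_dist_of_mem (s := C) (x := x (k + 1)) hlimC
  · calc ‖x (k + 1) - xlim‖ ≤ ‖x (k + 1) - xinf i‖ + ‖xinf i - xlim‖ :=
        norm_sub_le_norm_sub_add_norm_sub _ _ _
      _ ≤ (c i * q i ^ (k - i) + E i) + E i := add_le_add (hB i k hik) (hclose i)
      _ = c i * q i ^ (k - i) + 2 * E i := by ring
end
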